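/- arXiv:2604.10192 — 6 statements merged into one kernel-verified Lean document; each statement's English description precedes it below -/
import Mathlib

section
/- If a finite simplicial complex K is collapsible (admits a sequence of elementary collapses to a single vertex), then K admits a discrete Morse function with exactly one critical simplex, namely a vertex. Consequently the minimal Morse number M(K) equals 1. -/
open Classical

/-- A finite abstract simplicial complex on vertex type `V`. -/
structure SComplex (V : Type) [DecidableEq V] where
  faces : Finset (Finset V)
  nonempty_of_mem : ∀ s ∈ faces, s.Nonempty
  down_closed : ∀ s ∈ faces, ∀ t, t ⊆ s → t.Nonempty → t ∈ faces

namespace SComplex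

variable {V : Type} [DecidableEq V]

/-- The set entering the discrete-Morse condition at a simplex `σ`:
codimension-one faces `τ ⊂ σ` with `f τ ≥ f σ` together with
codimension-one cofaces `τ ⊃ σ` with `f τ ≤ f σ`. -/
noncomputable def exitSet (K : SComplex V) (f : Finset V → ℝ) (σ : Finset V) :
    Finset (Finset V) :=
  K.faces.filter (fun τ =>
    (τ ⊆ σ ∧ τ.card + 1 = σ.card ∧ f σ ≤ f τ) ∨
    (σ ⊆ τ ∧ σ.card + 1 = τ.card ∧ f τ ≤ f σ))

/-- Forman's discrete Morse condition. -/
def IsDiscreteMorse (K : SComplex V) (f : Finset V → ℝ) : Prop :=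
  ∀ σ ∈ K.faces, (K.exitSet f σ).card ≤ 1

def IsCritical (K : SComplex V) (f : Finset V → ℝ) (σ : Finset V) : Prop :=
  σ ∈ K.faces ∧ K.exitSet f σ = ∅

noncomputable def critSet (K : SComplex V) (f : Finset V → ℝ) : Finset (Finset V) :=
  K.faces.filter (fun σ => K.exitSet f σ = ∅)

/-- total number of critical simplices of `f` -/
noncomputable def critCount (K : SComplex V) (f : Finset V → ℝ) : ℕ :=
  (K.critSet f).card

/-- number of critical `p`-simplices of `f` -/
noncomputable def critCountDim (K : SComplex V) (f : Finset V → ℝ) (p : ℕ) : ℕ :=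
  ((K.critSet f).filter (fun σ => σ.card = p + 1)).card

/-- minimal Morse number -/
noncomputable def M (K : SComplex V) : ℕ :=
  sInf {n | ∃ f, K.IsDiscreteMorse f ∧ K.critCount f = n}

/-- minimal number of critical `k`-simplices -/
noncomputable def mdim (K : SComplex V) (k : ℕ) : ℕ :=
  sInf {n | ∃ f, K.IsDiscreteMorse f ∧ K.critCountDim f k = n}

/-- `σ` is a free face of `τ`. -/
def IsFreePair (K : SComplex V) (σ τ : Finset V) : Prop :=
  σ ∈ K.faces ∧ τ ∈ K.faces ∧ σ ⊂ τ ∧ ∀ ρ ∈ K.faces, σ ⊂ ρ → ρ = τ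

/-- `K'` is obtained from `K` by one elementary collapse. -/
def CollapseStep (K K' : SComplex V) : Prop :=
  ∃ σ τ, K.IsFreePair σ τ ∧ K'.faces = K.faces \ {σ, τ}

def CollapsesTo (K L : SComplex V) : Prop :=
  Relation.ReflTransGen (fun A B => CollapseStep A B) K L

/-- the single-vertex complex -/
def pt (v : V) : SComplex V where
  faces := {{v}}
  nonempty_of_mem := by intro s hs; simp only [Finset.mem_singleton] at hs; subst hs; exact ⟨v, by simp⟩
  down_closed := by
    intro s hs t hts ht
    simp only [Finset.mem_singleton] at hs ⊢
    subst hs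
    rcases (Finset.subset_singleton_iff.mp hts) with h | h
    · exact absurd h (Finset.nonempty_iff_ne_empty.mp ht)
    · exact h

def Collapsible (K : SComplex V) : Prop := ∃ v : V, K.CollapsesTo (pt v)

/-- simple-homotopy equivalence: generated by elementary collapses and expansions -/
def SHEquiv (K L : SComplex V) : Prop :=
  Relation.ReflTransGen (fun A B => CollapseStep A B ∨ CollapseStep B A) K L

/-- a closed non-trivial V-path within a set of (codim-one) pairs -/
def HasClosedVPath (pairs : Set (Finset V × Finset V)) : Prop :=
  ∃ c : List (Finset V × Finset V), ∃ h : c ≠ [],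
    (∀ p ∈ c, p ∈ pairs) ∧
    c.Chain' (fun p q => q.1 ⊆ p.2 ∧ q.1 ≠ p.1) ∧
    (c.head h).1 ⊆ (c.getLast h).2 ∧ (c.head h).1 ≠ (c.getLast h).1

/-- a discrete vector field on `K` -/
structure DVField (K : SComplex V) where
  pairs : Finset (Finset V × Finset V)
  mem₁ : ∀ p ∈ pairs, p.1 ∈ K.faces
  mem₂ : ∀ p ∈ pairs, p.2 ∈ K.faces
  codim : ∀ p ∈ pairs, p.1 ⊆ p.2 ∧ p.1.card + 1 = p.2.card
  disj : ∀ p ∈ pairs, ∀ q ∈ pairs, p ≠ q →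
      p.1 ≠ q.1 ∧ p.1 ≠ q.2 ∧ p.2 ≠ q.1 ∧ p.2 ≠ q.2

/-- the gradient pairs of a discrete Morse function `f` -/
noncomputable def gradPairs (K : SComplex V) (f : Finset V → ℝ) :
    Finset (Finset V × Finset V) :=
  (K.faces ×ˢ K.faces).filter
    (fun p => p.1 ⊆ p.2 ∧ p.1.card + 1 = p.2.card ∧ f p.2 ≤ f p.1)

/-- the sublevel subcomplex `K_α` (Forman's `K(α)`). -/
noncomputable def sublevel (K : SComplex V) (f : Finset V → ℝ) (α : ℝ) : SComplex V where
  faces := K.faces.filter (fun σ => ∃ τ ∈ K.faces, f τ ≤ α ∧ σ ⊆ τ)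
  nonempty_of_mem := fun s hs => K.nonempty_of_mem s (Finset.mem_filter.mp hs).1
  down_closed := by
    intro s hs t hts ht
    rw [Finset.mem_filter] at hs ⊢
    obtain ⟨hsK, τ, hτ, hfτ, hsτ⟩ := hs
    exact ⟨K.down_closed s hsK t hts ht, τ, hτ, hfτ, hts.trans hsτ⟩

/-- a recorded sequence of elementary collapses from `K` to `L`,
listing the removed free pairs in order -/
inductive CollapseSeq : SComplex V → List (Finset V × Finset V) → SComplex V → Prop
  | nil (K : SComplex V) : CollapseSeq K [] K
  | cons {K K' L : SComplex V} {σ τ : Finset V} {l : List (Finset V × Finset V)} :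
      K.IsFreePair σ τ → K'.faces = K.faces \ {σ, τ} →
      CollapseSeq K' l L → CollapseSeq K ((σ, τ) :: l) L

/-- geometric realization of `K` inside `V → ℝ` -/
def realization [Fintype V] (K : SComplex V) : Set (V → ℝ) :=
  {x | (∀ v, 0 ≤ x v) ∧ (∑ v, x v) = 1 ∧ ∃ s ∈ K.faces, ∀ v, x v ≠ 0 → v ∈ s}

end SComplex

section Aux
open Finset

variable {V : Type} [DecidableEq V]

namespace SComplex

/-- Fixed-point-free involution implies even cardinality. -/
lemma even_card_of_invol {α : Type*} [DecidableEq α] (g : α → α) :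
    ∀ s : Finset α, (∀ a ∈ s, g a ∈ s) → (∀ a ∈ s, g (g a) = a) →
      (∀ a ∈ s, g a ≠ a) → Even s.card := by
  intro s
  induction s using Finset.strongInduction with
  | _ s ih =>
    intro hmem hinv hne
    rcases s.eq_empty_or_nonempty with rfl | ⟨a, ha⟩
    · simp
    · have hga : g a ∈ s := hmem a ha
      have hgane : g a ≠ a := hne a ha
      set t := s \ {a, g a} with ht
      have hsub : ({a, g a} : Finset α) ⊆ s := by
        intro x hx
        rcases Finset.mem_insert.mp hx with rfl | hx
        · exact ha
        · rw [Finset.mem_singleton] at hx; exact hx ▸ hga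
      have hpair : ({a, g a} : Finset α).card = 2 := Finset.card_pair hgane.symm
      have htss : t ⊂ s := by
        apply Finset.sdiff_ssubset hsub
        exact ⟨a, Finset.mem_insert_self _ _⟩
      have hts : t ⊆ s := htss.subset
      have hmemt : ∀ b ∈ t, b ∈ s ∧ b ≠ a ∧ b ≠ g a := by
        intro b hb
        rw [ht, Finset.mem_sdiff, Finset.mem_insert, Finset.mem_singleton] at hb
        exact ⟨hb.1, fun h => hb.2 (Or.inl h), fun h => hb.2 (Or.inr h)⟩
      have hgmt : ∀ b ∈ t, g b ∈ t := by
        intro b hb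
        obtain ⟨hbs, hba, hbga⟩ := hmemt b hb
        rw [ht, Finset.mem_sdiff, Finset.mem_insert, Finset.mem_singleton]
        refine ⟨hmem b hbs, ?_⟩
        rintro (h | h)
        · exact hbga (by rw [← h, hinv b hbs])
        · have : g (g b) = g (g a) := by rw [h]
          rw [hinv b hbs, hinv a ha] at this
          exact hba this
      have heven : Even t.card :=
        ih t htss hgmt (fun b hb => hinv b (hmemt b hb).1) (fun b hb => hne b (hmemt b hb).1)
      have hcard : t.card = s.card - 2 := by
        rw [ht, Finset.card_sdiff_of_subset hsub, hpair]
      have h2le : 2 ≤ s.card := by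
        calc 2 = ({a, g a} : Finset α).card := hpair.symm
        _ ≤ s.card := Finset.card_le_card hsub
      have : s.card = t.card + 2 := by omega
      rw [this]
      exact heven.add (by decide)

lemma mem_exitSet_iff (K : SComplex V) (f : Finset V → ℝ) (σ x : Finset V) :
    x ∈ K.exitSet f σ ↔ x ∈ K.faces ∧
      ((x ⊆ σ ∧ x.card + 1 = σ.card ∧ f σ ≤ f x) ∨
       (σ ⊆ x ∧ σ.card + 1 = x.card ∧ f x ≤ f σ)) := by
  simp [exitSet, Finset.mem_filter]

/-- any discrete Morse function on a complex with an odd number of faces has a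
critical simplex -/
lemma crit_nonempty (K : SComplex V) (f : Finset V → ℝ)
    (hm : K.IsDiscreteMorse f) (hodd : Odd K.faces.card) :
    (K.critSet f).Nonempty := by
  by_contra hempty
  rw [Finset.not_nonempty_iff_eq_empty, critSet, Finset.filter_eq_empty_iff] at hempty
  -- every face has nonempty exit set
  have hne : ∀ σ ∈ K.faces, (K.exitSet f σ).Nonempty := by
    intro σ hσ
    exact Finset.nonempty_iff_ne_empty.mpr (hempty hσ)
  classical
  set g : Finset V → Finset V :=
    fun σ => if h : (K.exitSet f σ).Nonempty then h.choose else σ with hg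
  have hgmem : ∀ σ ∈ K.faces, g σ ∈ K.exitSet f σ := by
    intro σ hσ
    rw [hg]
    simp only [dif_pos (hne σ hσ)]
    exact (hne σ hσ).choose_spec
  have hgsing : ∀ σ ∈ K.faces, ∀ x ∈ K.exitSet f σ, x = g σ := by
    intro σ hσ x hx
    have h1 := hm σ hσ
    exact Finset.card_le_one.mp h1 x hx (g σ) (hgmem σ hσ)
  have hgface : ∀ σ ∈ K.faces, g σ ∈ K.faces := by
    intro σ hσ
    exact ((K.mem_exitSet_iff f σ (g σ)).mp (hgmem σ hσ)).1
  have hgne : ∀ σ ∈ K.faces, g σ ≠ σ := by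
    intro σ hσ h
    rcases ((K.mem_exitSet_iff f σ (g σ)).mp (hgmem σ hσ)).2 with ⟨_, hc, _⟩ | ⟨_, hc, _⟩ <;>
      rw [h] at hc <;> omega
  have hginv : ∀ σ ∈ K.faces, g (g σ) = σ := by
    intro σ hσ
    have hmem := (K.mem_exitSet_iff f σ (g σ)).mp (hgmem σ hσ)
    have hσin : σ ∈ K.exitSet f (g σ) := by
      rw [K.mem_exitSet_iff]
      rcases hmem.2 with ⟨h1, h2, h3⟩ | ⟨h1, h2, h3⟩
      · exact ⟨hσ, Or.inr ⟨h1, h2, h3⟩⟩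
      · exact ⟨hσ, Or.inl ⟨h1, h2, h3⟩⟩
    exact (hgsing (g σ) (hgface σ hσ) σ hσin).symm
  have heven : Even K.faces.card :=
    even_card_of_invol g K.faces hgface hginv hgne
  rw [Nat.even_iff] at heven
  rw [Nat.odd_iff] at hodd
  omega

/-- a free pair has codimension one -/
lemma freePair_codim {K : SComplex V} {σ τ : Finset V} (h : K.IsFreePair σ τ) :
    σ.card + 1 = τ.card := by
  obtain ⟨hσ, hτ, hst, huniq⟩ := h
  have hσne : σ.Nonempty := K.nonempty_of_mem σ hσ
  have hlt : σ.card < τ.card := Finset.card_lt_card hst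
  by_contra hne
  obtain ⟨a, haτ, haσ⟩ := Finset.exists_of_ssubset hst
  set ρ := τ.erase a with hρ
  have hσρ : σ ⊆ ρ := fun x hx =>
    Finset.mem_erase.mpr ⟨fun he => haσ (he ▸ hx), hst.subset hx⟩
  have hρτ : ρ ⊆ τ := Finset.erase_subset _ _
  have hρcard : ρ.card + 1 = τ.card := Finset.card_erase_add_one haτ
  have hρmem : ρ ∈ K.faces :=
    K.down_closed τ hτ ρ hρτ (hσne.mono hσρ)
  have hssub : σ ⊂ ρ := by
    refine Finset.ssubset_iff_subset_ne.mpr ⟨hσρ, ?_⟩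
    intro h
    rw [h] at hne
    omega
  have := huniq ρ hρmem hssub
  rw [this] at hρcard
  omega

/-- parity of face count is preserved along collapses -/
lemma collapseStep_card {K K' : SComplex V} (h : K.CollapseStep K') :
    K.faces.card = K'.faces.card + 2 := by
  obtain ⟨σ, τ, ⟨hσ, hτ, hst, _⟩, hfaces⟩ := h
  have hne : σ ≠ τ := hst.ne
  have hsub : ({σ, τ} : Finset (Finset V)) ⊆ K.faces := by
    intro x hx
    rcases Finset.mem_insert.mp hx with rfl | hx
    · exact hσ
    · rw [Finset.mem_singleton] at hx; exact hx ▸ hτ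
  have hpair : ({σ, τ} : Finset (Finset V)).card = 2 := Finset.card_pair hne
  have h2le : 2 ≤ K.faces.card := hpair ▸ Finset.card_le_card hsub
  have : K'.faces = K.faces \ {σ, τ} := hfaces
  rw [this, Finset.card_sdiff_of_subset hsub, hpair]
  omega

lemma collapsesTo_odd {K L : SComplex V} (h : K.CollapsesTo L)
    (hL : Odd L.faces.card) : Odd K.faces.card := by
  induction h using Relation.ReflTransGen.head_induction_on with
  | refl => exact hL
  | head step _ ih =>
    have := collapseStep_card step
    rw [Nat.odd_iff] at ih ⊢
    omega

end SComplex
end Aux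
namespace SComplex

variable {V : Type} [DecidableEq V]

/-- Extend a perfect Morse function across one elementary expansion. -/
lemma extend_morse {K K' : SComplex V} {σ τ : Finset V} {v : V}
    (hfree : K.IsFreePair σ τ) (hK' : K'.faces = K.faces \ {σ, τ})
    (f' : Finset V → ℝ) (hm : K'.IsDiscreteMorse f')
    (hc : K'.critSet f' = {({v} : Finset V)}) :
    ∃ f, K.IsDiscreteMorse f ∧ K.critSet f = {({v} : Finset V)} := by
  classical
  obtain ⟨hσK, hτK, hst, huniq⟩ := hfree
  have hcodim : σ.card + 1 = τ.card := freePair_codim ⟨hσK, hτK, hst, huniq⟩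
  have hστ : σ ≠ τ := hst.ne
  set N : ℝ := 1 + ∑ ρ ∈ K'.faces, |f' ρ| with hN
  have hlt : ∀ ρ ∈ K'.faces, f' ρ < N := by
    intro ρ hρ
    have h1 : |f' ρ| ≤ ∑ x ∈ K'.faces, |f' x| :=
      Finset.single_le_sum (fun i _ => abs_nonneg (f' i)) hρ
    have h2 := le_abs_self (f' ρ)
    rw [hN]; linarith
  set f : Finset V → ℝ := fun x => if x = σ ∨ x = τ then N else f' x with hf
  have hσK' : σ ∉ K'.faces := by rw [hK']; simp
  have hτK' : τ ∉ K'.faces := by rw [hK']; simp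
  have hsubK : K'.faces ⊆ K.faces := by rw [hK']; exact Finset.sdiff_subset
  have hmemK : ∀ ρ, ρ ∈ K.faces ↔ ρ ∈ K'.faces ∨ ρ = σ ∨ ρ = τ := by
    intro ρ
    rw [hK', Finset.mem_sdiff, Finset.mem_insert, Finset.mem_singleton]
    constructor
    · intro h
      by_cases h1 : ρ = σ
      · exact Or.inr (Or.inl h1)
      by_cases h2 : ρ = τ
      · exact Or.inr (Or.inr h2)
      · exact Or.inl ⟨h, by tauto⟩
    · rintro (⟨h, _⟩ | rfl | rfl) <;> [exact h; exact hσK; exact hτK]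
  have hfρ : ∀ ρ ∈ K'.faces, f ρ = f' ρ := by
    intro ρ hρ
    rw [hf]
    simp only []
    rw [if_neg]
    rintro (rfl | rfl) <;> [exact hσK' hρ; exact hτK' hρ]
  have hfσ : f σ = N := by rw [hf]; simp
  have hfτ : f τ = N := by rw [hf]; simp
  have hmax : ∀ ρ ∈ K.faces, ¬ τ ⊂ ρ := by
    intro ρ hρ h
    exact h.ne (huniq ρ hρ (hst.trans h)).symm
  -- cofaces of σ in K are exactly τ
  have hcof : ∀ ρ ∈ K.faces, σ ⊆ ρ → σ.card + 1 = ρ.card → ρ = τ := by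
    intro ρ hρ hsub hcard
    apply huniq ρ hρ
    exact Finset.ssubset_iff_subset_ne.mpr ⟨hsub, fun h => by rw [h] at hcard; omega⟩
  -- exit sets of old simplices unchanged
  have hexit : ∀ ρ ∈ K'.faces, K.exitSet f ρ = K'.exitSet f' ρ := by
    intro ρ hρ
    ext x
    rw [mem_exitSet_iff, mem_exitSet_iff, hfρ ρ hρ]
    constructor
    · rintro ⟨hxK, hcond⟩
      rcases (hmemK x).mp hxK with hx | rfl | rfl
      · rw [hfρ x hx] at hcond; exact ⟨hx, hcond⟩
      · exfalso
        rcases hcond with ⟨h1, h2, h3⟩ | ⟨h1, h2, h3⟩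
        · exact hτK' ((hcof ρ (hsubK hρ) h1 h2) ▸ hρ)
        · rw [hfσ] at h3; exact absurd (lt_of_lt_of_le (hlt ρ hρ) h3) (lt_irrefl _)
      · exfalso
        rcases hcond with ⟨h1, h2, h3⟩ | ⟨h1, h2, h3⟩
        · exact hmax ρ (hsubK hρ)
            (Finset.ssubset_iff_subset_ne.mpr ⟨h1, fun h => by rw [h] at h2; omega⟩)
        · rw [hfτ] at h3; exact absurd (lt_of_lt_of_le (hlt ρ hρ) h3) (lt_irrefl _)
    · rintro ⟨hx, hcond⟩
      rw [← hfρ x hx] at hcond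
      exact ⟨hsubK hx, hcond⟩
  have hexitσ : K.exitSet f σ = {τ} := by
    ext x
    rw [mem_exitSet_iff, Finset.mem_singleton]
    constructor
    · rintro ⟨hxK, ⟨h1, h2, h3⟩ | ⟨h1, h2, h3⟩⟩
      · exfalso
        have hxσ : x ≠ σ := fun h => by rw [h] at h2; omega
        have hxτ : x ≠ τ := fun h => by rw [h] at h2; omega
        rcases (hmemK x).mp hxK with hx | rfl | rfl
        · rw [hfρ x hx, hfσ] at h3
          exact absurd (lt_of_le_of_lt h3 (hlt x hx)) (lt_irrefl _)
        · exact hxσ rfl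
        · exact hxτ rfl
      · exact hcof x hxK h1 h2
    · rintro rfl
      exact ⟨hτK, Or.inr ⟨hst.subset, hcodim, by rw [hfσ, hfτ]⟩⟩
  have hexitτ : K.exitSet f τ = {σ} := by
    ext x
    rw [mem_exitSet_iff, Finset.mem_singleton]
    constructor
    · rintro ⟨hxK, ⟨h1, h2, h3⟩ | ⟨h1, h2, h3⟩⟩
      · by_contra hxσ
        have hxτ : x ≠ τ := fun h => by rw [h] at h2; omega
        rcases (hmemK x).mp hxK with hx | rfl | rfl
        · rw [hfρ x hx, hfτ] at h3
          exact absurd (lt_of_le_of_lt h3 (hlt x hx)) (lt_irrefl _)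
        · exact hxσ rfl
        · exact hxτ rfl
      · exact absurd (Finset.ssubset_iff_subset_ne.mpr
          ⟨h1, fun h => by rw [h] at h2; omega⟩) (hmax x hxK)
    · rintro rfl
      exact ⟨hσK, Or.inl ⟨hst.subset, hcodim, by rw [hfσ, hfτ]⟩⟩
  refine ⟨f, ?_, ?_⟩
  · intro ρ hρ
    rcases (hmemK ρ).mp hρ with hx | rfl | rfl
    · rw [hexit ρ hx]; exact hm ρ hx
    · rw [hexitσ]; simp
    · rw [hexitτ]; simp
  · ext ρ
    rw [critSet, Finset.mem_filter, Finset.mem_singleton]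
    constructor
    · rintro ⟨hρK, hρe⟩
      rcases (hmemK ρ).mp hρK with hx | rfl | rfl
      · have : ρ ∈ K'.critSet f' := by
          rw [critSet, Finset.mem_filter]
          exact ⟨hx, by rw [← hexit ρ hx]; exact hρe⟩
        rw [hc, Finset.mem_singleton] at this
        exact this
      · rw [hexitσ] at hρe; exact absurd hρe (Finset.singleton_ne_empty τ)
      · rw [hexitτ] at hρe; exact absurd hρe (Finset.singleton_ne_empty σ)
    · rintro rfl
      have hv : ({v} : Finset V) ∈ K'.critSet f' := by rw [hc]; exact Finset.mem_singleton_self _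
      rw [critSet, Finset.mem_filter] at hv
      exact ⟨hsubK hv.1, by rw [hexit _ hv.1]; exact hv.2⟩

lemma pt_morse (v : V) :
    (pt v).IsDiscreteMorse (fun _ => 0) ∧
      (pt v).critSet (fun _ => 0) = {({v} : Finset V)} := by
  have hexit : (pt v).exitSet (fun _ => 0) {v} = ∅ := by
    rw [Finset.eq_empty_iff_forall_notMem]
    intro x hx
    rw [mem_exitSet_iff] at hx
    obtain ⟨hxf, hcond⟩ := hx
    have hx1 : x = {v} := by simpa [pt] using hxf
    subst hx1
    rcases hcond with ⟨_, h, _⟩ | ⟨_, h, _⟩ <;> simp at h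
  constructor
  · intro s hs
    have hs1 : s = {v} := by simpa [pt] using hs
    subst hs1
    rw [hexit]; simp
  · ext s
    rw [critSet, Finset.mem_filter, Finset.mem_singleton]
    constructor
    · rintro ⟨hs, _⟩; simpa [pt] using hs
    · rintro rfl
      exact ⟨by simp [pt], hexit⟩

lemma collapsesTo_pt_morse (K : SComplex V) (v : V) (h : K.CollapsesTo (pt v)) :
    ∃ f, K.IsDiscreteMorse f ∧ K.critSet f = {({v} : Finset V)} := by
  induction h using Relation.ReflTransGen.head_induction_on with
  | refl => exact ⟨fun _ => 0, pt_morse v⟩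
  | head step _ ih =>
    obtain ⟨σ, τ, hfree, hfaces⟩ := step
    obtain ⟨f', hm, hc⟩ := ih
    exact extend_morse hfree hfaces f' hm hc

end SComplex

/-- a collapsible finite simplicial complex admits a discrete Morse
function with exactly one critical simplex, a vertex; hence `M K = 1`. -/
theorem collapsible_exists_perfect_morse {V : Type} [DecidableEq V]
    (K : SComplex V) (hK : K.Collapsible) :
    (∃ f : Finset V → ℝ, K.IsDiscreteMorse f ∧
      ∃ v : V, K.critSet f = {({v} : Finset V)}) ∧ K.M = 1 := by
  obtain ⟨v, hcol⟩ := hK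
  obtain ⟨f, hm, hc⟩ := SComplex.collapsesTo_pt_morse K v hcol
  have hodd : Odd K.faces.card := by
    refine SComplex.collapsesTo_odd hcol ?_
    simp [SComplex.pt]
  have h1 : (1 : ℕ) ∈ {n | ∃ f, K.IsDiscreteMorse f ∧ K.critCount f = n} :=
    ⟨f, hm, by rw [SComplex.critCount, hc]; simp⟩
  have hlb : ∀ n ∈ {n | ∃ f, K.IsDiscreteMorse f ∧ K.critCount f = n}, 1 ≤ n := by
    rintro n ⟨g, hg, rfl⟩
    exact Finset.card_pos.mpr (SComplex.crit_nonempty K g hg hodd)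
  refine ⟨⟨f, hm, v, hc⟩, ?_⟩
  have hle := Nat.sInf_le h1
  have hmem := Nat.sInf_mem (⟨1, h1⟩ : Set.Nonempty _)
  have hge := hlb _ hmem
  exact le_antisymm hle hge
end

section
/- For any discrete Morse function f on a finite simplicial complex K, and any field F, the number c_p of critical p-simplices of f satisfies c_p ≥ dim H_p(K;F) for every p (weak Morse inequality). -/
open Classical

namespace SComplex

variable {V : Type} [DecidableEq V]

variable {V : Type} [DecidableEq V] [LinearOrder V]

/-- the `p`-simplices of `K` -/
def pSimp (K : SComplex V) (p : ℕ) : Finset (Finset V) :=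
  K.faces.filter (fun s => s.card = p + 1)

/-- incidence coefficient of a codimension-one face `σ` in `τ`, with the usual sign -/
noncomputable def incCoeff (F : Type) [Field F] (τ σ : Finset V) : F :=
  if σ ⊆ τ ∧ σ.card + 1 = τ.card then
    ∑ x ∈ τ \ σ, (-1 : F) ^ ((τ.filter (fun y => y < x)).card)
  else 0

/-- the simplicial boundary map `C_{p+1} → C_p` with coefficients in `F` -/
noncomputable def bdry (F : Type) [Field F] (K : SComplex V) (p : ℕ) :
    ({s // s ∈ K.pSimp (p + 1)} → F) →ₗ[F] ({s // s ∈ K.pSimp p} → F) :=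
  Matrix.toLin' (fun σ τ => incCoeff F (τ : Finset V) (σ : Finset V))

/-- cycles -/
noncomputable def cyc (F : Type) [Field F] (K : SComplex V) :
    (p : ℕ) → Submodule F ({s // s ∈ K.pSimp p} → F)
  | 0 => ⊤
  | (q + 1) => LinearMap.ker (bdry F K q)

/-- boundaries -/
noncomputable def bnd (F : Type) [Field F] (K : SComplex V) (p : ℕ) :
    Submodule F ({s // s ∈ K.pSimp p} → F) :=
  LinearMap.range (bdry F K p)

/-- the `p`-th Betti number of `K` with coefficients in the field `F` -/
noncomputable def betti (F : Type) [Field F] (K : SComplex V) (p : ℕ) : ℕ :=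
  Module.finrank F
    (↥(cyc F K p) ⧸ (Submodule.comap (cyc F K p).subtype (bnd F K p)))

end SComplex


section MorseAux

open SComplex Finset

variable {V : Type} [DecidableEq V] [LinearOrder V]

lemma MA.exists_insert_of_card {σ τ : Finset V} (h : σ ⊆ τ) (hc : σ.card + 1 = τ.card) :
    ∃ x, x ∉ σ ∧ τ = insert x σ := by
  have hd : (τ \ σ).card = 1 := by
    rw [Finset.card_sdiff_of_subset h]; omega
  obtain ⟨x, hx⟩ := Finset.card_eq_one.mp hd
  have hxm : x ∈ τ \ σ := hx ▸ Finset.mem_singleton_self x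
  refine ⟨x, (Finset.mem_sdiff.mp hxm).2, ?_⟩
  apply Finset.Subset.antisymm
  · intro y hy
    by_cases hys : y ∈ σ
    · exact Finset.mem_insert_of_mem hys
    · have hym : y ∈ τ \ σ := Finset.mem_sdiff.mpr ⟨hy, hys⟩
      rw [hx, Finset.mem_singleton] at hym
      simp [hym]
  · intro y hy
    rcases Finset.mem_insert.mp hy with rfl | hys
    · exact (Finset.mem_sdiff.mp hxm).1
    · exact h hys

lemma MA.incCoeff_insert (F : Type) [Field F] (σ : Finset V) (x : V) (hx : x ∉ σ) :
    incCoeff F (insert x σ) σ = (-1 : F) ^ ((σ.filter (fun y => y < x)).card) := by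
  have hsub : σ ⊆ insert x σ := Finset.subset_insert x σ
  have hcard : σ.card + 1 = (insert x σ).card := by
    rw [Finset.card_insert_of_notMem hx]
  have hsd : insert x σ \ σ = {x} := by
    ext y
    simp only [Finset.mem_sdiff, Finset.mem_insert, Finset.mem_singleton]
    constructor
    · rintro ⟨h1 | h1, h2⟩
      · exact h1
      · exact absurd h1 h2
    · rintro rfl; exact ⟨Or.inl rfl, hx⟩
  rw [incCoeff, if_pos ⟨hsub, hcard⟩, hsd, Finset.sum_singleton,
    Finset.filter_insert, if_neg (lt_irrefl x)]

lemma MA.incCoeff_ne_zero (F : Type) [Field F] {σ τ : Finset V} (h : σ ⊆ τ)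
    (hc : σ.card + 1 = τ.card) : incCoeff F τ σ ≠ 0 := by
  obtain ⟨x, hx, rfl⟩ := MA.exists_insert_of_card h hc
  rw [MA.incCoeff_insert F σ x hx]
  exact pow_ne_zero _ (neg_ne_zero.mpr one_ne_zero)

lemma MA.incCoeff_eq_zero (F : Type) [Field F] {σ τ : Finset V}
    (h : ¬(σ ⊆ τ ∧ σ.card + 1 = τ.card)) : incCoeff F τ σ = 0 := by
  rw [incCoeff, if_neg h]

lemma MA.sum_incCoeff_eq_zero (F : Type) [Field F] (K : SComplex V) (q : ℕ)
    {σ ρ : Finset V} (hσ : σ ∈ K.pSimp q) (hρ : ρ ∈ K.pSimp (q + 2)) :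
    ∑ τ ∈ K.pSimp (q + 1), incCoeff F τ σ * incCoeff F ρ τ = 0 := by
  have hσc : σ.card = q + 1 := (Finset.mem_filter.mp hσ).2
  have hρc : ρ.card = q + 3 := (Finset.mem_filter.mp hρ).2
  have hρK : ρ ∈ K.faces := (Finset.mem_filter.mp hρ).1
  by_cases hsub : σ ⊆ ρ
  · have hsd : (ρ \ σ).card = 2 := by rw [Finset.card_sdiff_of_subset hsub]; omega
    obtain ⟨x, y, hne, hpair⟩ := Finset.card_eq_two.mp hsd
    suffices H : ∀ x y : V, x < y → ρ \ σ = {x, y} →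
        ∑ τ ∈ K.pSimp (q + 1), incCoeff F τ σ * incCoeff F ρ τ = 0 by
      rcases hne.lt_or_gt with h | h
      · exact H x y h hpair
      · exact H y x h (by rw [hpair, Finset.pair_comm])
    clear hpair hne x y
    intro x y hxy hpair
    have hx : x ∈ ρ \ σ := by rw [hpair]; simp
    have hy : y ∈ ρ \ σ := by rw [hpair]; simp
    have hxσ : x ∉ σ := (Finset.mem_sdiff.mp hx).2
    have hyσ : y ∉ σ := (Finset.mem_sdiff.mp hy).2
    have hxρ : x ∈ ρ := (Finset.mem_sdiff.mp hx).1
    have hyρ : y ∈ ρ := (Finset.mem_sdiff.mp hy).1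
    have hρeq : ρ = insert y (insert x σ) := by
      have h1 : σ ∪ (ρ \ σ) = ρ := Finset.union_sdiff_of_subset hsub
      rw [hpair] at h1
      rw [← h1]
      ext z
      simp only [Finset.mem_union, Finset.mem_insert, Finset.mem_singleton]
      tauto
    set τ₁ := insert x σ with hτ₁
    set τ₂ := insert y σ with hτ₂
    have hyτ₁ : y ∉ τ₁ := by
      simp only [hτ₁, Finset.mem_insert]
      push_neg
      exact ⟨(ne_of_lt hxy).symm, hyσ⟩
    have hxτ₂ : x ∉ τ₂ := by
      simp only [hτ₂, Finset.mem_insert]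
      push_neg
      exact ⟨ne_of_lt hxy, hxσ⟩
    have hρeq' : ρ = insert x τ₂ := by
      rw [hρeq, hτ₂, hτ₁, Finset.insert_comm]
    have hτ₁ρ : τ₁ ⊆ ρ := by rw [hρeq]; exact Finset.subset_insert _ _
    have hτ₂ρ : τ₂ ⊆ ρ := by rw [hρeq']; exact Finset.subset_insert _ _
    have hτ₁c : τ₁.card = q + 2 := by
      rw [hτ₁, Finset.card_insert_of_notMem hxσ]; omega
    have hτ₂c : τ₂.card = q + 2 := by
      rw [hτ₂, Finset.card_insert_of_notMem hyσ]; omega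
    have hτ₁K : τ₁ ∈ K.pSimp (q + 1) := by
      refine Finset.mem_filter.mpr ⟨K.down_closed ρ hρK τ₁ hτ₁ρ ?_, hτ₁c⟩
      exact Finset.insert_nonempty _ _
    have hτ₂K : τ₂ ∈ K.pSimp (q + 1) := by
      refine Finset.mem_filter.mpr ⟨K.down_closed ρ hρK τ₂ hτ₂ρ ?_, hτ₂c⟩
      exact Finset.insert_nonempty _ _
    have hτne : τ₁ ≠ τ₂ := by
      intro h
      apply hyτ₁
      rw [h, hτ₂]; exact Finset.mem_insert_self _ _
    have hpsub : ({τ₁, τ₂} : Finset (Finset V)) ⊆ K.pSimp (q + 1) := by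
      intro z hz
      rcases Finset.mem_insert.mp hz with rfl | hz
      · exact hτ₁K
      · rw [Finset.mem_singleton.mp hz]; exact hτ₂K
    rw [← Finset.sum_subset hpsub]
    · rw [Finset.sum_pair hτne]
      have e1 : incCoeff F τ₁ σ = (-1 : F) ^ ((σ.filter (fun z => z < x)).card) :=
        MA.incCoeff_insert F σ x hxσ
      have e2 : incCoeff F τ₂ σ = (-1 : F) ^ ((σ.filter (fun z => z < y)).card) :=
        MA.incCoeff_insert F σ y hyσ
      have e3 : incCoeff F ρ τ₁ = (-1 : F) ^ ((τ₁.filter (fun z => z < y)).card) := by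
        rw [hρeq]; exact MA.incCoeff_insert F τ₁ y hyτ₁
      have e4 : incCoeff F ρ τ₂ = (-1 : F) ^ ((τ₂.filter (fun z => z < x)).card) := by
        rw [hρeq']; exact MA.incCoeff_insert F τ₂ x hxτ₂
      have f1 : (τ₁.filter (fun z => z < y)).card = (σ.filter (fun z => z < y)).card + 1 := by
        rw [hτ₁, Finset.filter_insert, if_pos hxy, Finset.card_insert_of_notMem]
        intro h
        exact hxσ (Finset.mem_filter.mp h).1
      have f2 : (τ₂.filter (fun z => z < x)).card = (σ.filter (fun z => z < x)).card := by
        rw [hτ₂, Finset.filter_insert, if_neg (not_lt.mpr (le_of_lt hxy))]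
      rw [e1, e2, e3, e4, f1, f2, pow_succ]
      ring
    · intro τ hτ hτn
      by_cases h1 : σ ⊆ τ ∧ σ.card + 1 = τ.card
      · by_cases h2 : τ ⊆ ρ ∧ τ.card + 1 = ρ.card
        · exfalso
          obtain ⟨z, hzσ, rfl⟩ := MA.exists_insert_of_card h1.1 h1.2
          have hzρ : z ∈ ρ \ σ := Finset.mem_sdiff.mpr ⟨h2.1 (Finset.mem_insert_self _ _), hzσ⟩
          rw [hpair] at hzρ
          rcases Finset.mem_insert.mp hzρ with rfl | hz
          · exact hτn (Finset.mem_insert_self _ _)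
          · rw [Finset.mem_singleton] at hz
            subst hz
            exact hτn (Finset.mem_insert_of_mem (Finset.mem_singleton_self _))
        · rw [MA.incCoeff_eq_zero F h2, mul_zero]
      · rw [MA.incCoeff_eq_zero F h1, zero_mul]
  · apply Finset.sum_eq_zero
    intro τ hτ
    by_cases h1 : σ ⊆ τ ∧ σ.card + 1 = τ.card
    · by_cases h2 : τ ⊆ ρ ∧ τ.card + 1 = ρ.card
      · exact absurd (h1.1.trans h2.1) hsub
      · rw [MA.incCoeff_eq_zero F h2, mul_zero]
    · rw [MA.incCoeff_eq_zero F h1, zero_mul]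

lemma MA.bdry_comp_zero (F : Type) [Field F] (K : SComplex V) (q : ℕ) :
    (bdry F K q).comp (bdry F K (q + 1)) = 0 := by
  have hm : (Matrix.of fun (σ : {s // s ∈ K.pSimp q}) (τ : {s // s ∈ K.pSimp (q + 1)}) =>
        incCoeff F (τ : Finset V) (σ : Finset V)) *
      (Matrix.of fun (τ : {s // s ∈ K.pSimp (q + 1)}) (ρ : {s // s ∈ K.pSimp (q + 1 + 1)}) =>
        incCoeff F (ρ : Finset V) (τ : Finset V)) = 0 := by
    ext σ ρ
    rw [Matrix.mul_apply]
    have hsum : ∑ τ : {s // s ∈ K.pSimp (q + 1)},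
        incCoeff F (τ : Finset V) (σ : Finset V) * incCoeff F (ρ : Finset V) (τ : Finset V)
        = ∑ τ ∈ K.pSimp (q + 1),
          incCoeff F τ (σ : Finset V) * incCoeff F (ρ : Finset V) τ :=
      Finset.sum_coe_sort (K.pSimp (q + 1))
        (fun τ => incCoeff F τ (σ : Finset V) * incCoeff F (ρ : Finset V) τ)
    have hρ2 : (ρ : Finset V) ∈ K.pSimp (q + 2) := ρ.2
    rw [Matrix.zero_apply]
    simp only [Matrix.of_apply]
    exact hsum.trans (MA.sum_incCoeff_eq_zero F K q σ.2 hρ2)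
  calc (bdry F K q).comp (bdry F K (q + 1))
      = Matrix.toLin' ((Matrix.of fun (σ : {s // s ∈ K.pSimp q})
            (τ : {s // s ∈ K.pSimp (q + 1)}) => incCoeff F (τ : Finset V) (σ : Finset V)) *
          (Matrix.of fun (τ : {s // s ∈ K.pSimp (q + 1)})
            (ρ : {s // s ∈ K.pSimp (q + 1 + 1)}) => incCoeff F (ρ : Finset V) (τ : Finset V))) :=
        (Matrix.toLin'_mul _ _).symm
    _ = 0 := by rw [hm]; simp

/-- `p`-simplices that are the top of a gradient pair -/
noncomputable def MA.Dset (K : SComplex V) (f : Finset V → ℝ) (q : ℕ) : Finset (Finset V) :=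
  (K.pSimp q).filter (fun τ => ∃ σ ∈ K.faces, σ ⊆ τ ∧ σ.card + 1 = τ.card ∧ f τ ≤ f σ)

/-- `p`-simplices that are the bottom of a gradient pair -/
noncomputable def MA.Uset (K : SComplex V) (f : Finset V → ℝ) (q : ℕ) : Finset (Finset V) :=
  (K.pSimp q).filter (fun σ => ∃ τ ∈ K.faces, σ ⊆ τ ∧ σ.card + 1 = τ.card ∧ f τ ≤ f σ)

lemma MA.mem_exitSet {K : SComplex V} {f : Finset V → ℝ} {σ τ : Finset V} :
    τ ∈ K.exitSet f σ ↔ τ ∈ K.faces ∧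
      ((τ ⊆ σ ∧ τ.card + 1 = σ.card ∧ f σ ≤ f τ) ∨
       (σ ⊆ τ ∧ σ.card + 1 = τ.card ∧ f τ ≤ f σ)) := by
  rw [exitSet, Finset.mem_filter]

lemma MA.exit_unique {K : SComplex V} {f : Finset V → ℝ} (hf : K.IsDiscreteMorse f)
    {σ : Finset V} (hσ : σ ∈ K.faces) {τ₁ τ₂ : Finset V}
    (h1 : τ₁ ∈ K.exitSet f σ) (h2 : τ₂ ∈ K.exitSet f σ) : τ₁ = τ₂ :=
  Finset.card_le_one.mp (hf σ hσ) τ₁ h1 τ₂ h2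

lemma MA.mem_faces_of_mem_pSimp {K : SComplex V} {q : ℕ} {σ : Finset V}
    (h : σ ∈ K.pSimp q) : σ ∈ K.faces := (Finset.mem_filter.mp h).1

lemma MA.card_of_mem_pSimp {K : SComplex V} {q : ℕ} {σ : Finset V}
    (h : σ ∈ K.pSimp q) : σ.card = q + 1 := (Finset.mem_filter.mp h).2

lemma MA.card_partition (K : SComplex V) (f : Finset V → ℝ) (hf : K.IsDiscreteMorse f)
    (p : ℕ) : (K.pSimp p).card =
      K.critCountDim f p + (MA.Uset K f p).card + (MA.Dset K f p).card := by
  classical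
  set A := (K.pSimp p).filter (fun σ => K.exitSet f σ = ∅) with hA
  have hAcard : K.critCountDim f p = A.card := by
    rw [critCountDim, critSet, hA, pSimp]
    congr 1
    ext σ
    simp only [Finset.mem_filter]
    tauto
  have hcover : K.pSimp p = A ∪ MA.Uset K f p ∪ MA.Dset K f p := by
    ext σ
    simp only [hA, MA.Uset, MA.Dset, Finset.mem_union, Finset.mem_filter]
    constructor
    · intro hσ
      by_cases he : K.exitSet f σ = ∅
      · exact Or.inl (Or.inl ⟨hσ, he⟩)
      · obtain ⟨τ, hτ⟩ := Finset.nonempty_iff_ne_empty.mpr he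
        rw [MA.mem_exitSet] at hτ
        rcases hτ.2 with h | h
        · exact Or.inr ⟨hσ, τ, hτ.1, h.1, h.2.1, h.2.2⟩
        · exact Or.inl (Or.inr ⟨hσ, τ, hτ.1, h.1, h.2.1, h.2.2⟩)
    · rintro ((⟨h, -⟩ | ⟨h, -⟩) | ⟨h, -⟩) <;> exact h
  have hAU : Disjoint A (MA.Uset K f p) := by
    rw [Finset.disjoint_left]
    intro σ hσA hσU
    have he : K.exitSet f σ = ∅ := (Finset.mem_filter.mp hσA).2
    obtain ⟨τ, hτK, h1, h2, h3⟩ := (Finset.mem_filter.mp hσU).2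
    have : τ ∈ K.exitSet f σ := MA.mem_exitSet.mpr ⟨hτK, Or.inr ⟨h1, h2, h3⟩⟩
    rw [he] at this
    exact absurd this (Finset.notMem_empty τ)
  have hAD : Disjoint A (MA.Dset K f p) := by
    rw [Finset.disjoint_left]
    intro σ hσA hσD
    have he : K.exitSet f σ = ∅ := (Finset.mem_filter.mp hσA).2
    obtain ⟨τ, hτK, h1, h2, h3⟩ := (Finset.mem_filter.mp hσD).2
    have : τ ∈ K.exitSet f σ := MA.mem_exitSet.mpr ⟨hτK, Or.inl ⟨h1, h2, h3⟩⟩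
    rw [he] at this
    exact absurd this (Finset.notMem_empty τ)
  have hUD : Disjoint (MA.Uset K f p) (MA.Dset K f p) := by
    rw [Finset.disjoint_left]
    intro σ hσU hσD
    have hσK : σ ∈ K.faces := MA.mem_faces_of_mem_pSimp (Finset.mem_filter.mp hσU).1
    obtain ⟨τ, hτK, h1, h2, h3⟩ := (Finset.mem_filter.mp hσU).2
    obtain ⟨τ', hτ'K, h1', h2', h3'⟩ := (Finset.mem_filter.mp hσD).2
    have ht : τ ∈ K.exitSet f σ := MA.mem_exitSet.mpr ⟨hτK, Or.inr ⟨h1, h2, h3⟩⟩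
    have ht' : τ' ∈ K.exitSet f σ := MA.mem_exitSet.mpr ⟨hτ'K, Or.inl ⟨h1', h2', h3'⟩⟩
    have := MA.exit_unique hf hσK ht ht'
    subst this
    omega
  rw [hcover, Finset.card_union_of_disjoint, Finset.card_union_of_disjoint hAU, hAcard]
  rw [Finset.disjoint_union_left]
  exact ⟨hAD, hUD⟩

lemma MA.card_Uset_eq (K : SComplex V) (f : Finset V → ℝ) (hf : K.IsDiscreteMorse f)
    (q : ℕ) : (MA.Uset K f q).card = (MA.Dset K f (q + 1)).card := by
  classical
  have hex : ∀ σ ∈ MA.Uset K f q, ∃ τ ∈ K.faces, σ ⊆ τ ∧ σ.card + 1 = τ.card ∧ f τ ≤ f σ :=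
    fun σ hσ => (Finset.mem_filter.mp hσ).2
  apply Finset.card_bij (fun σ hσ => Classical.choose (hex σ hσ))
  · intro σ hσ
    obtain ⟨hτK, h1, h2, h3⟩ := Classical.choose_spec (hex σ hσ)
    set τ := Classical.choose (hex σ hσ)
    have hσc : σ.card = q + 1 := MA.card_of_mem_pSimp (Finset.mem_filter.mp hσ).1
    have hσK : σ ∈ K.faces := MA.mem_faces_of_mem_pSimp (Finset.mem_filter.mp hσ).1
    refine Finset.mem_filter.mpr ⟨Finset.mem_filter.mpr ⟨hτK, by omega⟩, σ, hσK, h1, h2, h3⟩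
  · intro σ₁ hσ₁ σ₂ hσ₂ heq
    obtain ⟨hτK, h1, h2, h3⟩ := Classical.choose_spec (hex σ₁ hσ₁)
    obtain ⟨hτK', h1', h2', h3'⟩ := Classical.choose_spec (hex σ₂ hσ₂)
    rw [heq] at h1 h2 h3
    set τ := Classical.choose (hex σ₂ hσ₂)
    have ht1 : σ₁ ∈ K.exitSet f τ := MA.mem_exitSet.mpr
      ⟨MA.mem_faces_of_mem_pSimp (Finset.mem_filter.mp hσ₁).1, Or.inl ⟨h1, h2, h3⟩⟩
    have ht2 : σ₂ ∈ K.exitSet f τ := MA.mem_exitSet.mpr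
      ⟨MA.mem_faces_of_mem_pSimp (Finset.mem_filter.mp hσ₂).1, Or.inl ⟨h1', h2', h3'⟩⟩
    exact MA.exit_unique hf hτK' ht1 ht2
  · intro τ hτ
    obtain ⟨σ, hσK, h1, h2, h3⟩ := (Finset.mem_filter.mp hτ).2
    have hτc : τ.card = q + 2 := MA.card_of_mem_pSimp (Finset.mem_filter.mp hτ).1
    have hτK : τ ∈ K.faces := MA.mem_faces_of_mem_pSimp (Finset.mem_filter.mp hτ).1
    have hσU : σ ∈ MA.Uset K f q := by
      refine Finset.mem_filter.mpr ⟨Finset.mem_filter.mpr ⟨hσK, by omega⟩, τ, hτK, h1, h2, h3⟩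
    refine ⟨σ, hσU, ?_⟩
    obtain ⟨hτ'K, h1', h2', h3'⟩ := Classical.choose_spec (hex σ hσU)
    set τ' := Classical.choose (hex σ hσU)
    have ht1 : τ' ∈ K.exitSet f σ := MA.mem_exitSet.mpr ⟨hτ'K, Or.inr ⟨h1', h2', h3'⟩⟩
    have ht2 : τ ∈ K.exitSet f σ := MA.mem_exitSet.mpr ⟨hτK, Or.inr ⟨h1, h2, h3⟩⟩
    exact MA.exit_unique hf hσK ht1 ht2

lemma MA.bdry_single (F : Type) [Field F] (K : SComplex V) (q : ℕ)
    (τ : {s // s ∈ K.pSimp (q + 1)}) (σ : {s // s ∈ K.pSimp q}) :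
    bdry F K q (Pi.single τ 1) σ = incCoeff F (τ : Finset V) (σ : Finset V) := by
  unfold bdry
  change Matrix.mulVec (Matrix.of fun (σ : {s // s ∈ K.pSimp q}) (τ : {s // s ∈ K.pSimp (q + 1)}) =>
    incCoeff F (τ : Finset V) (σ : Finset V)) (Pi.single τ 1) σ = _
  rw [Matrix.mulVec_single]
  exact mul_one _

lemma MA.rank_lower_bound (F : Type) [Field F] (K : SComplex V) (f : Finset V → ℝ)
    (hf : K.IsDiscreteMorse f) (q : ℕ) :
    (MA.Dset K f (q + 1)).card ≤ Module.finrank F ↥(LinearMap.range (bdry F K q)) := by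
  classical
  have emb : ∀ τ : {τ // τ ∈ MA.Dset K f (q + 1)}, (τ : Finset V) ∈ K.pSimp (q + 1) :=
    fun τ => (Finset.mem_filter.mp τ.2).1
  set v : {τ // τ ∈ MA.Dset K f (q + 1)} → ({s // s ∈ K.pSimp q} → F) :=
    fun τ => bdry F K q (Pi.single ⟨(τ : Finset V), emb τ⟩ 1) with hv
  have hv_app : ∀ (τ : {τ // τ ∈ MA.Dset K f (q + 1)}) (σ : {s // s ∈ K.pSimp q}),
      v τ σ = incCoeff F (τ : Finset V) (σ : Finset V) := by
    intro τ σ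
    rw [hv]
    exact MA.bdry_single F K q ⟨(τ : Finset V), emb τ⟩ σ
  have li : LinearIndependent F v := by
    rw [Fintype.linearIndependent_iff]
    intro g hg
    intro i₀
    by_contra hg0
    set S : Finset {τ // τ ∈ MA.Dset K f (q + 1)} := Finset.univ.filter (fun i => g i ≠ 0) with hS
    have hSne : S.Nonempty := ⟨i₀, Finset.mem_filter.mpr ⟨Finset.mem_univ _, hg0⟩⟩
    obtain ⟨j, hjS, hjmax⟩ := Finset.exists_max_image S (fun i => f (i : Finset V)) hSne
    obtain ⟨σs, hσsK, hsub, hcard, hle⟩ := (Finset.mem_filter.mp j.2).2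
    have hjc : (j : Finset V).card = q + 2 := MA.card_of_mem_pSimp (emb j)
    have hσsp : σs ∈ K.pSimp q := Finset.mem_filter.mpr ⟨hσsK, by omega⟩
    have hcoord := congrFun hg ⟨σs, hσsp⟩
    rw [Finset.sum_apply] at hcoord
    have hterm : ∀ i : {τ // τ ∈ MA.Dset K f (q + 1)}, i ∈ Finset.univ → i ≠ j →
        (g i • v i) ⟨σs, hσsp⟩ = 0 := by
      intro i _ hij
      by_cases hgi : g i = 0
      · simp [hgi]
      · have hiS : i ∈ S := Finset.mem_filter.mpr ⟨Finset.mem_univ _, hgi⟩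
        have hfle : f (i : Finset V) ≤ f (j : Finset V) := hjmax i hiS
        have hzero : incCoeff F (i : Finset V) σs = 0 := by
          by_contra hnz
          have hcond : σs ⊆ (i : Finset V) ∧ σs.card + 1 = (i : Finset V).card := by
            by_contra hc
            exact hnz (MA.incCoeff_eq_zero F hc)
          obtain ⟨σi, hσiK, hsub', hcard', hle'⟩ := (Finset.mem_filter.mp i.2).2
          have hiK : (i : Finset V) ∈ K.faces := MA.mem_faces_of_mem_pSimp (emb i)
          have hjK : (j : Finset V) ∈ K.faces := MA.mem_faces_of_mem_pSimp (emb j)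
          by_cases hσeq : σi = σs
          · subst hσeq
            have ht1 : (i : Finset V) ∈ K.exitSet f σi := MA.mem_exitSet.mpr
              ⟨hiK, Or.inr ⟨hcond.1, hcond.2, hle'⟩⟩
            have ht2 : (j : Finset V) ∈ K.exitSet f σi := MA.mem_exitSet.mpr
              ⟨hjK, Or.inr ⟨hsub, hcard, hle⟩⟩
            exact hij (Subtype.ext (MA.exit_unique hf hσiK ht1 ht2))
          · have hσlt : f σs < f (i : Finset V) := by
              by_contra hge
              push_neg at hge
              have ht1 : σi ∈ K.exitSet f (i : Finset V) := MA.mem_exitSet.mpr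
                ⟨hσiK, Or.inl ⟨hsub', hcard', hle'⟩⟩
              have ht2 : σs ∈ K.exitSet f (i : Finset V) := MA.mem_exitSet.mpr
                ⟨hσsK, Or.inl ⟨hcond.1, hcond.2, hge⟩⟩
              exact hσeq (MA.exit_unique hf hiK ht1 ht2)
            have : f (j : Finset V) < f (i : Finset V) := lt_of_le_of_lt hle hσlt
            exact absurd hfle (not_le.mpr this)
        rw [Pi.smul_apply, hv_app, hzero, smul_zero]
    have hsum : (∑ i : {τ // τ ∈ MA.Dset K f (q + 1)}, g i • v i) ⟨σs, hσsp⟩ = (g j • v j) ⟨σs, hσsp⟩ := by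
      rw [Finset.sum_apply]
      exact Finset.sum_eq_single j hterm (fun h => absurd (Finset.mem_univ j) h)
    rw [Finset.sum_apply] at hsum
    rw [hsum] at hcoord
    rw [Pi.smul_apply, hv_app, smul_eq_mul] at hcoord
    have hgj : g j = 0 := by
      rcases mul_eq_zero.mp (by rw [hcoord]; rfl : g j * incCoeff F (j : Finset V) σs = 0)
        with h | h
      · exact h
      · exact absurd h (MA.incCoeff_ne_zero F hsub hcard)
    exact (Finset.mem_filter.mp hjS).2 hgj
  have h1 : Submodule.span F (Set.range v) ≤ LinearMap.range (bdry F K q) := by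
    rw [Submodule.span_le]
    rintro _ ⟨τ, rfl⟩
    exact ⟨_, rfl⟩
  calc (MA.Dset K f (q + 1)).card = Fintype.card ↥(MA.Dset K f (q + 1)) := (Fintype.card_coe _).symm
    _ = Module.finrank F ↥(Submodule.span F (Set.range v)) := (finrank_span_eq_card li).symm
    _ ≤ Module.finrank F ↥(LinearMap.range (bdry F K q)) := Submodule.finrank_mono h1

lemma MA.bnd_le_cyc (F : Type) [Field F] (K : SComplex V) (p : ℕ) :
    bnd F K p ≤ cyc F K p := by
  cases p with
  | zero => exact le_top
  | succ q =>
    show LinearMap.range (bdry F K (q + 1)) ≤ LinearMap.ker (bdry F K q)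
    rw [LinearMap.range_le_ker_iff]
    exact MA.bdry_comp_zero F K q

lemma MA.betti_add_bnd (F : Type) [Field F] (K : SComplex V) (p : ℕ) :
    K.betti F p + Module.finrank F ↥(bnd F K p) = Module.finrank F ↥(cyc F K p) := by
  have hle := MA.bnd_le_cyc F K p
  have heq : Module.finrank F
      ↥(Submodule.comap (cyc F K p).subtype (bnd F K p)) = Module.finrank F ↥(bnd F K p) :=
    LinearEquiv.finrank_eq (Submodule.comapSubtypeEquivOfLe hle)
  rw [betti, ← heq]
  exact Submodule.finrank_quotient_add_finrank _

lemma MA.finrank_cyc_zero (F : Type) [Field F] (K : SComplex V) :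
    Module.finrank F ↥(cyc F K 0) = (K.pSimp 0).card := by
  show Module.finrank F ↥(⊤ : Submodule F ({s // s ∈ K.pSimp 0} → F)) = _
  rw [finrank_top, Module.finrank_fintype_fun_eq_card, Fintype.card_coe]

lemma MA.finrank_cyc_succ (F : Type) [Field F] (K : SComplex V) (q : ℕ) :
    Module.finrank F ↥(LinearMap.range (bdry F K q)) +
      Module.finrank F ↥(cyc F K (q + 1)) = (K.pSimp (q + 1)).card := by
  have h := LinearMap.finrank_range_add_finrank_ker (bdry F K q)
  rw [Module.finrank_fintype_fun_eq_card, Fintype.card_coe] at h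
  exact h

lemma MA.Dset_zero (K : SComplex V) (f : Finset V → ℝ) : MA.Dset K f 0 = ∅ := by
  apply Finset.eq_empty_of_forall_notMem
  intro τ hτ
  obtain ⟨σ, hσK, -, hc, -⟩ := (Finset.mem_filter.mp hτ).2
  have hτc : τ.card = 1 := MA.card_of_mem_pSimp (Finset.mem_filter.mp hτ).1
  have hσc : σ.card = 0 := by omega
  have := K.nonempty_of_mem σ hσK
  rw [Finset.card_eq_zero.mp hσc] at this
  exact Finset.not_nonempty_empty this

end MorseAux

/-- weak Morse inequalities `c_p ≥ dim H_p(K;F)`. -/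
theorem weak_morse_inequality {V : Type} [DecidableEq V] [LinearOrder V]
    (F : Type) [Field F] (K : SComplex V) (f : Finset V → ℝ)
    (hf : K.IsDiscreteMorse f) (p : ℕ) :
    K.betti F p ≤ K.critCountDim f p := by
  classical
  have hpart := MA.card_partition K f hf p
  have hb := MA.betti_add_bnd F K p
  have hbnd : Module.finrank F ↥(SComplex.bnd F K p) =
      Module.finrank F ↥(LinearMap.range (SComplex.bdry F K p)) := rfl
  have hu : (MA.Uset K f p).card ≤
      Module.finrank F ↥(LinearMap.range (SComplex.bdry F K p)) := by
    rw [MA.card_Uset_eq K f hf p]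
    exact MA.rank_lower_bound F K f hf p
  cases p with
  | zero =>
    have hcyc := MA.finrank_cyc_zero F K
    have hd0 : (MA.Dset K f 0).card = 0 := by rw [MA.Dset_zero]; rfl
    omega
  | succ q =>
    have hcyc := MA.finrank_cyc_succ F K q
    have hd : (MA.Dset K f (q + 1)).card ≤
        Module.finrank F ↥(LinearMap.range (SComplex.bdry F K q)) :=
      MA.rank_lower_bound F K f hf q
    omega
end

section
/- For any discrete Morse function f on a finite simplicial complex K of dimension n, the alternating sum of the numbers of critical simplices equals the Euler characteristic: c_0 − c_1 + c_2 − ⋯ + (−1)^n c_n = χ(K). -/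
open Classical

/-- exit set membership is symmetric -/
lemma exitSet_symm {V : Type} [DecidableEq V] (K : SComplex V) (f : Finset V → ℝ)
    {σ τ : Finset V} (hσ : σ ∈ K.faces) (hτ : τ ∈ K.exitSet f σ) :
    σ ∈ K.exitSet f τ := by
  simp only [SComplex.exitSet, Finset.mem_filter] at hτ ⊢
  exact ⟨hσ, hτ.2.symm⟩

lemma sign_cancel {a b : ℕ} (ha : 1 ≤ a) (h : a + 1 = b) :
    (-1 : ℤ) ^ (a - 1) + (-1 : ℤ) ^ (b - 1) = 0 := by
  have hb : b - 1 = (a - 1) + 1 := by omega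
  rw [hb, pow_succ]; ring

/-- rewrite the alternating sum over dimensions as a sum of signs over simplices -/
lemma sum_sign_fiber {V : Type} [DecidableEq V] (K : SComplex V) (s : Finset (Finset V))
    (hs : s ⊆ K.faces) :
    ∑ p ∈ Finset.range (K.faces.sup Finset.card),
        (-1 : ℤ) ^ p * ((s.filter (fun σ => σ.card = p + 1)).card : ℤ) =
      ∑ σ ∈ s, (-1 : ℤ) ^ (σ.card - 1) := by
  rw [← Finset.sum_fiberwise_of_maps_to (g := fun σ : Finset V => σ.card - 1)
      (t := Finset.range (K.faces.sup Finset.card))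
      (fun σ hσ => by
        have h1 : 1 ≤ σ.card := Finset.card_pos.mpr (K.nonempty_of_mem σ (hs hσ))
        have h2 : σ.card ≤ K.faces.sup Finset.card := Finset.le_sup (hs hσ)
        simp only [Finset.mem_range]; omega)
      (fun σ => (-1 : ℤ) ^ (σ.card - 1))]
  refine Finset.sum_congr rfl fun p _ => ?_
  have hfe : s.filter (fun σ => σ.card - 1 = p) = s.filter (fun σ => σ.card = p + 1) := by
    apply Finset.filter_congr
    intro σ hσ
    have h1 : 1 ≤ σ.card := Finset.card_pos.mpr (K.nonempty_of_mem σ (hs hσ))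
    constructor <;> intro h <;> omega
  rw [hfe]
  rw [Finset.sum_congr rfl (fun σ hσ => by
    have : σ.card = p + 1 := (Finset.mem_filter.mp hσ).2
    rw [show σ.card - 1 = p by omega])]
  rw [Finset.sum_const, nsmul_eq_mul, mul_comm]

/-- the alternating sum of the numbers of critical simplices of a
discrete Morse function equals the Euler characteristic. -/
theorem morse_euler_characteristic {V : Type} [DecidableEq V]
    (K : SComplex V) (f : Finset V → ℝ) (hf : K.IsDiscreteMorse f) :
    ∑ p ∈ Finset.range (K.faces.sup Finset.card),
        (-1 : ℤ) ^ p * (K.critCountDim f p : ℤ) =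
      ∑ p ∈ Finset.range (K.faces.sup Finset.card),
        (-1 : ℤ) ^ p * ((K.faces.filter (fun s => s.card = p + 1)).card : ℤ) := by
  simp only [SComplex.critCountDim]
  rw [sum_sign_fiber K (K.critSet f) (Finset.filter_subset _ _),
      sum_sign_fiber K K.faces (Finset.Subset.refl _)]
  rw [← Finset.sum_filter_add_sum_filter_not K.faces
      (fun σ => K.exitSet f σ = ∅) (fun σ => (-1 : ℤ) ^ (σ.card - 1))]
  have hzero : ∑ σ ∈ K.faces.filter (fun σ => ¬ K.exitSet f σ = ∅),
      (-1 : ℤ) ^ (σ.card - 1) = 0 := by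
    have hmem : ∀ σ, σ ∈ K.faces.filter (fun σ => ¬ K.exitSet f σ = ∅) →
        (K.exitSet f σ).Nonempty ∧ σ ∈ K.faces := fun σ hσ => by
      have := Finset.mem_filter.mp hσ
      exact ⟨Finset.nonempty_iff_ne_empty.mpr this.2, this.1⟩
    refine Finset.sum_involution (fun σ hσ => (hmem σ hσ).1.choose) ?_ ?_ ?_ ?_
    · -- cancellation
      intro σ hσ
      have hτ := (hmem σ hσ).1.choose_spec
      set τ := (hmem σ hσ).1.choose with hτdef
      simp only [SComplex.exitSet, Finset.mem_filter] at hτ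
      have h1 : 1 ≤ σ.card := Finset.card_pos.mpr (K.nonempty_of_mem σ (hmem σ hσ).2)
      have h2 : 1 ≤ τ.card := Finset.card_pos.mpr (K.nonempty_of_mem τ hτ.1)
      rcases hτ.2 with ⟨_, hc, _⟩ | ⟨_, hc, _⟩
      · rw [add_comm]; exact sign_cancel h2 hc
      · exact sign_cancel h1 hc
    · -- g a ≠ a
      intro σ hσ _
      have hτ := (hmem σ hσ).1.choose_spec
      set τ := (hmem σ hσ).1.choose with hτdef
      simp only [SComplex.exitSet, Finset.mem_filter] at hτ
      intro heq
      have hts : τ = σ := heq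
      rcases hτ.2 with ⟨_, hc, _⟩ | ⟨_, hc, _⟩ <;> rw [hts] at hc <;> omega
    · -- membership
      intro σ hσ
      have hτ := (hmem σ hσ).1.choose_spec
      set τ := (hmem σ hσ).1.choose with hτdef
      have hsym := exitSet_symm K f (hmem σ hσ).2 hτ
      have hτF : τ ∈ K.faces := (Finset.mem_filter.mp hτ).1
      refine Finset.mem_filter.mpr ⟨hτF, ?_⟩
      exact fun h => by rw [h] at hsym; exact absurd hsym (Finset.notMem_empty σ)
    · -- involution
      intro σ hσ
      have hτ := (hmem σ hσ).1.choose_spec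
      set τ := (hmem σ hσ).1.choose with hτdef
      have hτF : τ ∈ K.faces := (Finset.mem_filter.mp hτ).1
      have hsym := exitSet_symm K f (hmem σ hσ).2 hτ
      have hcard : (K.exitSet f τ).card ≤ 1 := hf τ hτF
      have hsingle : K.exitSet f τ = {σ} := by
        apply Finset.eq_singleton_iff_unique_mem.mpr
        refine ⟨hsym, fun x hx => ?_⟩
        exact Finset.card_le_one.mp hcard x hx σ hsym
      have hτN : τ ∈ K.faces.filter (fun σ => ¬ K.exitSet f σ = ∅) :=
        Finset.mem_filter.mpr ⟨hτF,
          fun h => by rw [h] at hsym; exact absurd hsym (Finset.notMem_empty σ)⟩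
      have := (hmem τ hτN).1.choose_spec
      exact Finset.card_le_one.mp hcard _ this _ hsym
  rw [hzero, add_zero]
  rfl
end

section
/- A discrete vector field V on a finite simplicial complex K is the gradient vector field of some discrete Morse function if and only if V contains no non-trivial closed V-paths. -/
open Classical

namespace ForGrad

open SComplex Relation

variable {V : Type} [DecidableEq V] {K : SComplex V}

/-- step relation on pairs of a vector field -/
def S (W : DVField K) (p q : Finset V × Finset V) : Prop :=
  p ∈ W.pairs ∧ q ∈ W.pairs ∧ q.1 ⊆ p.2 ∧ q.1 ≠ p.1

lemma slot_unique (W : DVField K) {p q : Finset V × Finset V} {σ : Finset V}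
    (hp : p ∈ W.pairs) (hq : q ∈ W.pairs)
    (h1 : σ = p.1 ∨ σ = p.2) (h2 : σ = q.1 ∨ σ = q.2) : p = q := by
  by_contra hne
  obtain ⟨a, b, c, d⟩ := W.disj p hp q hq hne
  rcases h1 with h1 | h1 <;> rcases h2 with h2 | h2
  · exact a (h1.symm.trans h2)
  · exact b (h1.symm.trans h2)
  · exact c (h1.symm.trans h2)
  · exact d (h1.symm.trans h2)

lemma chain_strong (W : DVField K) :
    ∀ {a : Finset V × Finset V} {l : List (Finset V × Finset V)},
      List.Chain (fun p q => q.1 ⊆ p.2 ∧ q.1 ≠ p.1) a l →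
      (∀ x ∈ a :: l, x ∈ W.pairs) →
      Relation.ReflTransGen (S W) a ((a :: l).getLast (by simp)) := by
  intro a l
  induction l generalizing a with
  | nil => intro _ _; simp only [List.getLast_singleton]; exact .refl
  | cons b t ih =>
    intro h hmem
    simp only [List.Chain, List.isChain_cons_cons] at h
    have hab : S W a b := ⟨hmem a (by simp), hmem b (by simp), h.1.1, h.1.2⟩
    have := ih h.2 (fun x hx => hmem x (List.mem_cons_of_mem _ hx))
    rw [List.getLast_cons (by simp)]
    exact Relation.ReflTransGen.head hab this

lemma chain_mem_pairs (W : DVField K) {a : Finset V × Finset V}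
    {l : List (Finset V × Finset V)} (h : List.Chain (S W) a l) :
    ∀ x ∈ l, x ∈ W.pairs := by
  induction l generalizing a with
  | nil => simp
  | cons b t ih =>
    simp only [List.Chain, List.isChain_cons_cons] at h
    intro x hx
    rcases List.mem_cons.mp hx with rfl | hx
    · exact h.1.2.1
    · exact ih h.2 x hx

lemma cycle_to_vpath (W : DVField K) {p : Finset V × Finset V}
    (h : Relation.TransGen (S W) p p) :
    SComplex.HasClosedVPath (↑W.pairs : Set (Finset V × Finset V)) := by
  obtain ⟨b, hpb, hbp⟩ := (Relation.TransGen.tail'_iff).mp h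
  obtain ⟨l, hl, hlast⟩ := List.exists_isChain_cons_of_relationReflTransGen hpb
  refine ⟨p :: l, by simp, ?_, ?_, ?_, ?_⟩
  · intro x hx
    rcases List.mem_cons.mp hx with rfl | hx
    · exact hbp.2.1
    · exact chain_mem_pairs W hl x hx
  · exact List.Chain.imp (fun a b h => ⟨h.2.2.1, h.2.2.2⟩) hl
  · simp only [List.head_cons]
    rw [show (p :: l).getLast (by simp) = b from hlast]
    exact hbp.2.2.1
  · simp only [List.head_cons]
    rw [show (p :: l).getLast (by simp) = b from hlast]
    exact hbp.2.2.2

noncomputable def val (W : DVField K) (p : Finset V × Finset V) : ℕ :=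
  (W.pairs.filter (fun q => Relation.ReflTransGen (S W) p q)).card

noncomputable def eps (W : DVField K) (p : Finset V × Finset V) : ℝ :=
  ((val W p : ℝ) + 1) / ((W.pairs.card : ℝ) + 2)

lemma eps_pos (W : DVField K) (p : Finset V × Finset V) : 0 < eps W p := by
  unfold eps; positivity

lemma eps_lt_one (W : DVField K) (p : Finset V × Finset V) : eps W p < 1 := by
  unfold eps
  rw [div_lt_one (by positivity)]
  have : val W p ≤ W.pairs.card := Finset.card_filter_le _ _
  have : (val W p : ℝ) ≤ W.pairs.card := by exact_mod_cast this
  linarith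

lemma val_lt (W : DVField K) (hcyc : ∀ q, ¬ Relation.TransGen (S W) q q)
    {p q : Finset V × Finset V} (h : S W p q) : val W q < val W p := by
  apply Finset.card_lt_card
  rw [Finset.ssubset_def]
  constructor
  · intro x hx
    rw [Finset.mem_filter] at hx ⊢
    exact ⟨hx.1, Relation.ReflTransGen.head h hx.2⟩
  · intro hsub
    have hp : p ∈ W.pairs.filter (fun x => Relation.ReflTransGen (S W) p x) :=
      Finset.mem_filter.mpr ⟨h.1, .refl⟩
    have := Finset.mem_filter.mp (hsub hp)
    exact hcyc p (Relation.TransGen.head' h this.2)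

lemma eps_lt (W : DVField K) (hcyc : ∀ q, ¬ Relation.TransGen (S W) q q)
    {p q : Finset V × Finset V} (h : S W p q) : eps W q < eps W p := by
  have := val_lt W hcyc h
  have : (val W q : ℝ) < val W p := by exact_mod_cast this
  unfold eps
  gcongr

def slot (W : DVField K) (σ : Finset V) : Prop :=
  ∃ p, p ∈ W.pairs ∧ (σ = p.1 ∨ σ = p.2)

noncomputable def fval (W : DVField K) : Finset V → ℝ := fun σ =>
  if h : slot W σ then ((h.choose.1.card : ℝ) - 1) + eps W h.choose
  else (σ.card : ℝ) - 1

lemma fval_pair (W : DVField K) {p : Finset V × Finset V} {σ : Finset V}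
    (hp : p ∈ W.pairs) (hσ : σ = p.1 ∨ σ = p.2) :
    fval W σ = ((p.1.card : ℝ) - 1) + eps W p := by
  have h : slot W σ := ⟨p, hp, hσ⟩
  rw [fval, dif_pos h]
  obtain ⟨h1, h2⟩ := h.choose_spec
  rw [slot_unique W h1 hp h2 hσ]

lemma fval_unpaired (W : DVField K) {σ : Finset V} (hσ : ¬ slot W σ) :
    fval W σ = (σ.card : ℝ) - 1 := dif_neg hσ

lemma fval_eq_of_mem (W : DVField K) {p : Finset V × Finset V} (hp : p ∈ W.pairs) :
    fval W p.1 = fval W p.2 := by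
  rw [fval_pair W hp (Or.inl rfl), fval_pair W hp (Or.inr rfl)]

/-- the key strict inequality across unpaired codimension-one incidences -/
lemma fval_strict (W : DVField K) (hcyc : ∀ q, ¬ Relation.TransGen (S W) q q)
    {σ τ : Finset V} (hσ : σ ∈ K.faces) (hτ : τ ∈ K.faces)
    (hsub : σ ⊆ τ) (hcard : σ.card + 1 = τ.card) (hW : (σ, τ) ∉ W.pairs) :
    fval W σ < fval W τ := by
  have hn : ((τ.card : ℝ)) = (σ.card : ℝ) + 1 := by exact_mod_cast hcard.symm
  by_cases hs : slot W σ
  · obtain ⟨q, hq, hqs⟩ := hs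
    have hqcodim := (W.codim q hq).2
    by_cases ht : slot W τ
    · obtain ⟨p, hp, hps⟩ := ht
      have hpcodim := (W.codim p hp).2
      rw [fval_pair W hq hqs, fval_pair W hp hps]
      rcases hqs with hq1 | hq2 <;> rcases hps with hp1 | hp2
      · -- σ = q.1, τ = p.1
        have e1 : (q.1.card : ℝ) = σ.card := by rw [← hq1]
        have e2 : (p.1.card : ℝ) = (σ.card : ℝ) + 1 := by rw [← hp1, ← hn]
        have := eps_lt_one W q
        have := eps_pos W p
        linarith
      · -- σ = q.1, τ = p.2 : the path case
        have hSpq : S W p q := by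
          refine ⟨hp, hq, ?_, ?_⟩
          · rw [← hq1, ← hp2]; exact hsub
          · intro hcon
            apply hW
            have : (σ, τ) = p := by
              rw [hq1, hcon, hp2]
            rw [this]; exact hp
        have := eps_lt W hcyc hSpq
        have e1 : (q.1.card : ℝ) = σ.card := by rw [← hq1]
        have e2 : (p.1.card : ℝ) = σ.card := by
          have : p.1.card + 1 = τ.card := by rw [hpcodim, hp2]
          have : p.1.card = σ.card := by omega
          exact_mod_cast this
        linarith
      · -- σ = q.2, τ = p.1
        have e1 : (q.1.card : ℝ) = (σ.card : ℝ) - 1 := by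
          have : q.1.card + 1 = σ.card := by rw [hqcodim, hq2]
          have h0 : ((q.1.card : ℝ)) + 1 = σ.card := by exact_mod_cast this
          linarith
        have e2 : (p.1.card : ℝ) = (σ.card : ℝ) + 1 := by rw [← hp1, ← hn]
        have := eps_lt_one W q
        have := eps_pos W p
        linarith
      · -- σ = q.2, τ = p.2
        have e1 : (q.1.card : ℝ) = (σ.card : ℝ) - 1 := by
          have : q.1.card + 1 = σ.card := by rw [hqcodim, hq2]
          have h0 : ((q.1.card : ℝ)) + 1 = σ.card := by exact_mod_cast this
          linarith
        have e2 : (p.1.card : ℝ) = σ.card := by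
          have : p.1.card + 1 = τ.card := by rw [hpcodim, hp2]
          have : p.1.card = σ.card := by omega
          exact_mod_cast this
        have := eps_lt_one W q
        have := eps_pos W p
        linarith
    · rw [fval_pair W hq hqs, fval_unpaired W ht]
      rcases hqs with hq1 | hq2
      · have e1 : (q.1.card : ℝ) = σ.card := by rw [← hq1]
        have := eps_lt_one W q
        linarith
      · have e1 : (q.1.card : ℝ) = (σ.card : ℝ) - 1 := by
          have : q.1.card + 1 = σ.card := by rw [hqcodim, hq2]
          have h0 : ((q.1.card : ℝ)) + 1 = σ.card := by exact_mod_cast this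
          linarith
        have := eps_lt_one W q
        linarith
  · rw [fval_unpaired W hs]
    by_cases ht : slot W τ
    · obtain ⟨p, hp, hps⟩ := ht
      have hpcodim := (W.codim p hp).2
      rw [fval_pair W hp hps]
      rcases hps with hp1 | hp2
      · have e2 : (p.1.card : ℝ) = (σ.card : ℝ) + 1 := by rw [← hp1, ← hn]
        have := eps_pos W p
        linarith
      · have e2 : (p.1.card : ℝ) = σ.card := by
          have : p.1.card + 1 = τ.card := by rw [hpcodim, hp2]
          have : p.1.card = σ.card := by omega
          exact_mod_cast this
        have := eps_pos W p
        linarith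
    · rw [fval_unpaired W ht]
      linarith

end ForGrad

/-- a discrete vector field is the gradient vector field of a
discrete Morse function iff it has no non-trivial closed V-paths. -/

theorem gradient_iff_no_closed_path {V : Type} [DecidableEq V]
    (K : SComplex V) (W : SComplex.DVField K) :
    (∃ f : Finset V → ℝ, K.IsDiscreteMorse f ∧ W.pairs = K.gradPairs f) ↔
      ¬ SComplex.HasClosedVPath (↑W.pairs : Set (Finset V × Finset V)) := by
  constructor
  · rintro ⟨f, hM, hWg⟩ hP
    obtain ⟨c, hne, hmem, hchain, hsub, hhl⟩ := hP
    set LT : (Finset V × Finset V) → (Finset V × Finset V) → Prop :=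
      fun p q => q.1.card < p.1.card ∨ (q.1.card = p.1.card ∧ f q.1 < f p.1) with hLT
    have step_lt : ∀ p q, ForGrad.S W p q → LT p q := by
      rintro p q ⟨hp, hq, hsub', hne'⟩
      have hp' := hWg ▸ hp
      have hq' := hWg ▸ hq
      rw [SComplex.gradPairs, Finset.mem_filter, Finset.mem_product] at hp' hq'
      obtain ⟨⟨hp1, hp2⟩, hpsub, hpcard, hpf⟩ := hp'
      obtain ⟨⟨hq1, hq2⟩, hqsub, hqcard, hqf⟩ := hq'
      have hpqne : p ≠ q := fun h => hne' (by rw [h])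
      have h12 : q.1 ≠ p.2 := by
        have := (W.disj p hp q hq hpqne).2.2.1
        exact fun h => this h.symm
      have hss : q.1 ⊂ p.2 := ssubset_of_subset_of_ne hsub' h12
      have hltc : q.1.card < p.2.card := Finset.card_lt_card hss
      rcases lt_or_eq_of_le (by omega : q.1.card ≤ p.1.card) with h | h
      · exact Or.inl h
      · refine Or.inr ⟨h, ?_⟩
        have hcodim : q.1.card + 1 = p.2.card := by omega
        by_contra hle
        push_neg at hle
        have hle2 : f p.2 ≤ f q.1 := le_trans hpf hle
        have hmem1 : p.1 ∈ K.exitSet f p.2 := by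
          rw [SComplex.exitSet, Finset.mem_filter]
          exact ⟨hp1, Or.inl ⟨hpsub, hpcard, hpf⟩⟩
        have hmem2 : q.1 ∈ K.exitSet f p.2 := by
          rw [SComplex.exitSet, Finset.mem_filter]
          exact ⟨hq1, Or.inl ⟨hsub', hcodim, hle2⟩⟩
        have hcard1 := hM p.2 hp2
        have h2 : 1 < (K.exitSet f p.2).card :=
          Finset.one_lt_card.mpr ⟨p.1, hmem1, q.1, hmem2, fun h => hne' h.symm⟩
        omega
    have LT_trans : ∀ a b c, LT a b → LT b c → LT a c := by
      rintro a b c (h | ⟨h1, h2⟩) (h' | ⟨h1', h2'⟩)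
      · exact Or.inl (by omega)
      · exact Or.inl (by omega)
      · exact Or.inl (by omega)
      · exact Or.inr ⟨h1'.trans h1, h2'.trans h2⟩
    have LT_irrefl : ∀ a, ¬ LT a a := by
      rintro a (h | ⟨h1, h2⟩)
      · omega
      · exact lt_irrefl _ h2
    obtain ⟨a, l, rfl⟩ : ∃ a l, c = a :: l := by
      cases c with
      | nil => exact absurd rfl hne
      | cons a l => exact ⟨a, l, rfl⟩
    simp only [List.head_cons] at hsub hhl
    have hmem' : ∀ x ∈ a :: l, x ∈ W.pairs := fun x hx => Finset.mem_coe.mp (hmem x hx)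
    have rtg := ForGrad.chain_strong W hchain hmem'
    have hstep_back : ForGrad.S W ((a :: l).getLast (by simp)) a :=
      ⟨hmem' _ (List.getLast_mem (by simp)), hmem' a (by simp), hsub, hhl⟩
    have hLTlast : LT ((a :: l).getLast (by simp)) a := step_lt _ _ hstep_back
    have rtg_lt : ∀ {x y : Finset V × Finset V},
        Relation.ReflTransGen (ForGrad.S W) x y → x = y ∨ LT x y := by
      intro x y h
      induction h with
      | refl => exact Or.inl rfl
      | tail h1 h2 ih =>
        rcases ih with rfl | ih
        · exact Or.inr (step_lt _ _ h2)
        · exact Or.inr (LT_trans _ _ _ ih (step_lt _ _ h2))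
    rcases rtg_lt rtg with heq | hlt
    · rw [← heq] at hLTlast
      exact LT_irrefl _ hLTlast
    · exact LT_irrefl _ (LT_trans _ _ _ hlt hLTlast)
  · intro hnc
    have hcyc : ∀ q, ¬ Relation.TransGen (ForGrad.S W) q q :=
      fun q h => hnc (ForGrad.cycle_to_vpath W h)
    refine ⟨ForGrad.fval W, ?_, ?_⟩
    · intro σ hσ
      rw [Finset.card_le_one]
      have key : ∀ t ∈ K.exitSet (ForGrad.fval W) σ,
          ((t, σ) ∈ W.pairs ∧ t.card + 1 = σ.card) ∨
          ((σ, t) ∈ W.pairs ∧ σ.card + 1 = t.card) := by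
        intro t ht
        rw [SComplex.exitSet, Finset.mem_filter] at ht
        obtain ⟨htf, h1 | h2⟩ := ht
        · left
          refine ⟨?_, h1.2.1⟩
          by_contra hn
          have := ForGrad.fval_strict W hcyc htf hσ h1.1 h1.2.1 hn
          linarith [h1.2.2]
        · right
          refine ⟨?_, h2.2.1⟩
          by_contra hn
          have := ForGrad.fval_strict W hcyc hσ htf h2.1 h2.2.1 hn
          linarith [h2.2.2]
      intro t1 ht1 t2 ht2
      rcases key t1 ht1 with ⟨hw1, hc1⟩ | ⟨hw1, hc1⟩ <;>
        rcases key t2 ht2 with ⟨hw2, hc2⟩ | ⟨hw2, hc2⟩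
      · have := ForGrad.slot_unique W hw1 hw2 (Or.inr rfl) (Or.inr rfl)
        exact (Prod.mk.injEq _ _ _ _ ▸ this).1
      · have := ForGrad.slot_unique W hw1 hw2 (Or.inr rfl) (Or.inl rfl)
        have h1 := (Prod.mk.injEq _ _ _ _ ▸ this).1
        subst h1
        omega
      · have := ForGrad.slot_unique W hw1 hw2 (Or.inl rfl) (Or.inr rfl)
        have h1 := (Prod.mk.injEq _ _ _ _ ▸ this).1
        subst h1
        omega
      · have := ForGrad.slot_unique W hw1 hw2 (Or.inl rfl) (Or.inl rfl)
        exact (Prod.mk.injEq _ _ _ _ ▸ this).2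
    · apply Finset.ext
      intro p
      rw [SComplex.gradPairs, Finset.mem_filter, Finset.mem_product]
      constructor
      · intro hp
        exact ⟨⟨W.mem₁ p hp, W.mem₂ p hp⟩, (W.codim p hp).1, (W.codim p hp).2,
          le_of_eq (ForGrad.fval_eq_of_mem W hp).symm⟩
      · rintro ⟨⟨h1, h2⟩, hsub, hcard, hf⟩
        by_contra hpn
        have hpn' : (p.1, p.2) ∉ W.pairs := by rwa [Prod.mk.eta]
        have := ForGrad.fval_strict W hcyc h1 h2 hsub hcard hpn'
        linarith
end

section
/- There exists a filtration K_0 ⊂ K_1 ⊂ K_2 of connected finite simplicial complexes such that every inclusion induces an isomorphism on all homology groups (all three complexes are contractible, so the persistence module is that of a point), yet the Morse complexity profile (M(K_0), M(K_1), M(K_2)) = (1, ≥2, 1) is non-constant. Concretely, take K_0 a vertex of the Dunce hat D, K_1 = D, and K_2 = Cone(D). -/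
open Classical

namespace DunceAux

open SComplex

def dec (a : ℕ) : Finset (Fin 9) := Finset.univ.filter (fun v => a.testBit v.val)

def toF (L : List ℕ) : Finset (Finset (Fin 9)) := (L.map dec).toFinset

def encF (t : Finset (Fin 9)) : ℕ := ∑ v ∈ t, 2 ^ v.val

lemma mem_dec {a : ℕ} {v : Fin 9} : v ∈ dec a ↔ a.testBit v.val := by
  simp [dec]

set_option maxRecDepth 10000 in
lemma dec_enc : ∀ t : Finset (Fin 9), dec (encF t) = t := by decide

set_option maxRecDepth 10000 in
lemma enc_lt : ∀ t : Finset (Fin 9), encF t < 512 := by decide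

set_option maxRecDepth 10000 in
lemma enc_ne_zero : ∀ t : Finset (Fin 9), t.Nonempty → encF t ≠ 0 := by decide

lemma testBit_ge {a i : ℕ} (ha : a < 512) (hi : 9 ≤ i) : a.testBit i = false :=
  Nat.testBit_lt_two_pow (lt_of_lt_of_le ha (Nat.pow_le_pow_right (by norm_num : 0 < 2) hi))

lemma dec_subset_of_and {a b : ℕ} (h : a &&& b = a) : dec a ⊆ dec b := by
  intro v hv
  rw [mem_dec] at hv ⊢
  have h2 := congrArg (fun x => x.testBit v.val) h
  simp only [Nat.testBit_and] at h2
  rw [hv] at h2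
  simpa using h2.symm

lemma and_of_dec_subset {a b : ℕ} (ha : a < 512) (h : dec a ⊆ dec b) :
    a &&& b = a := by
  apply Nat.eq_of_testBit_eq
  intro i
  rw [Nat.testBit_and]
  rcases lt_or_ge i 9 with hi | hi
  · by_cases hbit : a.testBit i
    · have hv : (⟨i, hi⟩ : Fin 9) ∈ dec a := mem_dec.mpr hbit
      have h2 := mem_dec.mp (h hv)
      simp only at h2
      simp [hbit, h2]
    · simp [hbit]
  · simp [testBit_ge ha hi]

lemma dec_inj {a b : ℕ} (ha : a < 512) (hb : b < 512) (h : dec a = dec b) : a = b := by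
  apply Nat.eq_of_testBit_eq
  intro i
  rcases lt_or_ge i 9 with hi | hi
  · have h2 : ((⟨i, hi⟩ : Fin 9) ∈ dec a) ↔ ((⟨i, hi⟩ : Fin 9) ∈ dec b) := by rw [h]
    simp only [mem_dec] at h2
    by_cases hbit : a.testBit i
    · simp [hbit, h2.mp hbit]
    · by_cases hbit2 : b.testBit i
      · exact absurd (h2.mpr hbit2) hbit
      · simp [hbit, hbit2]
  · rw [testBit_ge ha hi, testBit_ge hb hi]

lemma dec_ne {a b : ℕ} (ha : a < 512) (hb : b < 512) (h : a ≠ b) : dec a ≠ dec b :=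
  fun he => h (dec_inj ha hb he)

lemma mem_toF {L : List ℕ} {s : Finset (Fin 9)} : s ∈ toF L ↔ ∃ c ∈ L, dec c = s := by
  simp [toF, List.mem_toFinset, eq_comm]

/-! ### code-level collapse checking -/

def subB (a b : ℕ) : Bool := a &&& b == a

def freeB (L : List ℕ) (a b : ℕ) : Bool :=
  decide (a ∈ L) && decide (b ∈ L) && subB a b && (a != b) &&
    L.all (fun c => !(subB a c && (a != c)) || c == b)

def remove (L : List ℕ) (a b : ℕ) : List ℕ := L.filter (fun c => c != a && c != b)

def okL : List ℕ → List (ℕ × ℕ) → Bool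
  | _, [] => true
  | L, p :: S => freeB L p.1 p.2 && okL (remove L p.1 p.2) S

def runL : List ℕ → List (ℕ × ℕ) → List ℕ
  | L, [] => L
  | L, p :: S => runL (remove L p.1 p.2) S

def bddL (L : List ℕ) : Bool := L.all (fun c => c != 0 && decide (c < 512))

lemma bddL_remove {L : List ℕ} {a b : ℕ} (h : bddL L = true) : bddL (remove L a b) = true := by
  simp only [bddL, List.all_eq_true] at h ⊢
  intro c hc
  exact h c (List.mem_of_mem_filter hc)

lemma bdd_of_mem {L : List ℕ} (h : bddL L = true) {c : ℕ} (hc : c ∈ L) :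
    c ≠ 0 ∧ c < 512 := by
  simp only [bddL, List.all_eq_true] at h
  have := h c hc
  simp only [Bool.and_eq_true, bne_iff_ne, decide_eq_true_eq] at this
  exact this

/-- The Prop-level free-pair condition on a face set. -/
lemma freePair_of_freeB {L : List ℕ} {a b : ℕ} (hb : bddL L = true)
    (h : freeB L a b = true) :
    (a ∈ L ∧ b ∈ L) ∧ dec a ∈ toF L ∧ dec b ∈ toF L ∧ dec a ⊂ dec b ∧
      ∀ ρ ∈ toF L, dec a ⊂ ρ → ρ = dec b := by
  simp only [freeB, Bool.and_eq_true, decide_eq_true_eq, List.all_eq_true, bne_iff_ne,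
    subB, beq_iff_eq] at h
  obtain ⟨⟨⟨⟨haL, hbL⟩, hab⟩, hne⟩, hall⟩ := h
  have ha512 := (bdd_of_mem hb haL).2
  have hb512 := (bdd_of_mem hb hbL).2
  refine ⟨⟨haL, hbL⟩, mem_toF.mpr ⟨a, haL, rfl⟩, mem_toF.mpr ⟨b, hbL, rfl⟩, ?_, ?_⟩
  · exact Finset.ssubset_iff_subset_ne.mpr ⟨dec_subset_of_and hab, dec_ne ha512 hb512 hne⟩
  · intro ρ hρ hssub
    obtain ⟨c, hcL, rfl⟩ := mem_toF.mp hρ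
    have hc512 := (bdd_of_mem hb hcL).2
    have hsub : a &&& c = a := and_of_dec_subset ha512 hssub.subset
    have hac : a ≠ c := fun he => (ssubset_irrefl (dec a)) (by rw [he] at hssub ⊢; exact hssub)
    have h3 := hall c hcL
    rw [Bool.or_eq_true, Bool.not_eq_true', Bool.and_eq_false_iff] at h3
    rcases h3 with h3 | h3
    · rcases h3 with h3 | h3
      · exact absurd hsub (by simpa [subB] using h3)
      · exact absurd hac (by simpa using h3)
    · rw [show c = b by simpa using h3]

lemma toF_remove {L : List ℕ} {a b : ℕ} (hb : bddL L = true)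
    (ha : a < 512) (hb' : b < 512) :
    toF (remove L a b) = toF L \ {dec a, dec b} := by
  ext s
  simp only [mem_toF, Finset.mem_sdiff, Finset.mem_insert, Finset.mem_singleton, remove,
    List.mem_filter, Bool.and_eq_true, bne_iff_ne]
  constructor
  · rintro ⟨c, ⟨hcL, hca, hcb⟩, rfl⟩
    have hc512 := (bdd_of_mem hb hcL).2
    exact ⟨⟨c, hcL, rfl⟩, by
      push_neg
      exact ⟨dec_ne hc512 ha hca, dec_ne hc512 hb' hcb⟩⟩
  · rintro ⟨⟨c, hcL, rfl⟩, hne⟩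
    push_neg at hne
    have hc512 := (bdd_of_mem hb hcL).2
    exact ⟨c, ⟨hcL, fun he => hne.1 (he ▸ rfl), fun he => hne.2 (he ▸ rfl)⟩, rfl⟩

end DunceAux
namespace DunceAux

set_option maxRecDepth 100000 in
lemma enc_dec : ∀ a ∈ Finset.range 512, encF (dec a) = a := by decide

/-- boolean well-formedness check for a face-code list. -/
def wfL (L : List ℕ) : Bool :=
  bddL L && L.all (fun c => (List.range 512).all (fun d => !(subB d c) || d == 0 || decide (d ∈ L)))

lemma wfL_bdd {L : List ℕ} (h : wfL L = true) : bddL L = true := by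
  simp only [wfL, Bool.and_eq_true] at h; exact h.1

def mkC (L : List ℕ) (h : wfL L = true) : SComplex (Fin 9) where
  faces := toF L
  nonempty_of_mem := by
    intro s hs
    obtain ⟨c, hcL, rfl⟩ := mem_toF.mp hs
    obtain ⟨hc0, hc512⟩ := bdd_of_mem (wfL_bdd h) hcL
    by_contra hne
    rw [Finset.not_nonempty_iff_eq_empty] at hne
    apply hc0
    have h1 : encF (dec c) = c := enc_dec c (Finset.mem_range.mpr hc512)
    rw [hne] at h1
    simpa [encF] using h1.symm
  down_closed := by
    intro s hs t hts htne
    obtain ⟨c, hcL, rfl⟩ := mem_toF.mp hs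
    simp only [wfL, Bool.and_eq_true, List.all_eq_true] at h
    obtain ⟨hb, hall⟩ := h
    have hsub : encF t &&& c = encF t := by
      apply and_of_dec_subset (enc_lt t)
      rw [dec_enc]; exact hts
    have hd := hall c hcL (encF t) (by simp [List.mem_range, enc_lt t])
    rw [Bool.or_eq_true, Bool.or_eq_true, Bool.not_eq_true', beq_iff_eq] at hd
    rcases hd with (hd | hd) | hd
    · exact absurd hsub (by simpa [subB] using hd)
    · exact absurd hd (enc_ne_zero t htne)
    · rw [decide_eq_true_eq] at hd
      exact mem_toF.mpr ⟨encF t, hd, dec_enc t⟩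

lemma mkC_faces (L : List ℕ) (h : wfL L = true) : (mkC L h).faces = toF L := rfl

lemma scomplex_ext {K L : SComplex (Fin 9)} (h : K.faces = L.faces) : K = L := by
  cases K; cases L; simp only at h; subst h; rfl

/-- one elementary collapse, given the free-pair conditions -/
def stepC (K : SComplex (Fin 9)) (σ τ : Finset (Fin 9))
    (h : σ ∈ K.faces ∧ τ ∈ K.faces ∧ σ ⊂ τ ∧ ∀ ρ ∈ K.faces, σ ⊂ ρ → ρ = τ) :
    SComplex (Fin 9) where
  faces := K.faces \ {σ, τ}
  nonempty_of_mem := fun s hs => K.nonempty_of_mem s (Finset.mem_sdiff.mp hs).1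
  down_closed := by
    intro s hs t hts htne
    rw [Finset.mem_sdiff] at hs ⊢
    obtain ⟨hsK, hsn⟩ := hs
    refine ⟨K.down_closed s hsK t hts htne, ?_⟩
    simp only [Finset.mem_insert, Finset.mem_singleton] at hsn ⊢
    push_neg at hsn ⊢
    obtain ⟨hσ, hτ, hστ, hfree⟩ := h
    constructor
    · intro he
      have hss : σ ⊂ s := lt_of_le_of_ne (he ▸ hts) (fun h2 => hsn.1 h2.symm)
      exact hsn.2 (hfree s hsK hss)
    · intro he
      have hss : σ ⊂ s := lt_of_lt_of_le hστ (he ▸ hts)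
      exact hsn.2 (hfree s hsK hss)

lemma stepC_collapseStep (K : SComplex (Fin 9)) (σ τ : Finset (Fin 9)) (h) :
    SComplex.CollapseStep K (stepC K σ τ h) :=
  ⟨σ, τ, ⟨h.1, h.2.1, h.2.2.1, h.2.2.2⟩, rfl⟩

lemma collapsesTo_of_okL : ∀ (S : List (ℕ × ℕ)) (K : SComplex (Fin 9)) (LK : List ℕ),
    K.faces = toF LK → bddL LK = true → okL LK S = true →
    ∀ (L : SComplex (Fin 9)), L.faces = toF (runL LK S) → SComplex.CollapsesTo K L := by
  intro S
  induction S with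
  | nil =>
    intro K LK hK _ _ L hL
    have : K = L := scomplex_ext (by rw [hK, hL]; rfl)
    exact this ▸ Relation.ReflTransGen.refl
  | cons p S ih =>
    intro K LK hK hbdd hok L hL
    rw [okL, Bool.and_eq_true] at hok
    obtain ⟨hfree, hok'⟩ := hok
    have hfp0 := freePair_of_freeB hbdd hfree
    obtain ⟨⟨haL, hbL⟩, hfp⟩ := hfp0
    have ha512 : p.1 < 512 := (bdd_of_mem hbdd haL).2
    have hb512 : p.2 < 512 := (bdd_of_mem hbdd hbL).2
    rw [← hK] at hfp
    refine Relation.ReflTransGen.head (stepC_collapseStep K (dec p.1) (dec p.2) hfp) ?_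
    apply ih (stepC K (dec p.1) (dec p.2) hfp) (remove LK p.1 p.2) ?_ (bddL_remove hbdd) hok' L hL
    show K.faces \ {dec p.1, dec p.2} = toF (remove LK p.1 p.2)
    rw [toF_remove hbdd ha512 hb512, hK]

end DunceAux
namespace DunceAux
def delta7C : List ℕ := [1, 2, 3, 4, 5, 6, 7, 8, 9, 10, 11, 12, 13, 14, 15, 16, 17, 18, 19, 20, 21, 22, 23, 24, 25, 26, 27, 28, 29, 30, 31, 32, 33, 34, 35, 36, 37, 38, 39, 40, 41, 42, 43, 44, 45, 46, 47, 48, 49, 50, 51, 52, 53, 54, 55, 56, 57, 58, 59, 60, 61, 62, 63, 64, 65, 66, 67, 68, 69, 70, 71, 72, 73, 74, 75, 76, 77, 78, 79, 80, 81, 82, 83, 84, 85, 86, 87, 88, 89, 90, 91, 92, 93, 94, 95, 96, 97, 98, 99, 100, 101, 102, 103, 104, 105, 106, 107, 108, 109, 110, 111, 112, 113, 114, 115, 116, 117, 118, 119, 120, 121, 122, 123, 124, 125, 126, 127, 128, 129, 130, 131, 132, 133, 134, 135, 136, 137, 138, 139, 140, 141, 142, 143, 144, 145, 146, 147, 148,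 149, 150, 151, 152, 153, 154, 155, 156, 157, 158, 159, 160, 161, 162, 163, 164, 165, 166, 167, 168, 169, 170, 171, 172, 173, 174, 175, 176, 177, 178, 179, 180, 181, 182, 183, 184, 185, 186, 187, 188, 189, 190, 191, 192, 193, 194, 195, 196, 197, 198, 199, 200, 201, 202, 203, 204, 205, 206, 207, 208, 209, 210, 211, 212, 213, 214, 215, 216, 217, 218, 219, 220, 221, 222, 223, 224, 225, 226, 227, 228, 229, 230, 231, 232, 233, 234, 235, 236, 237, 238, 239, 240, 241, 242, 243, 244, 245, 246, 247, 248, 249, 250, 251, 252, 253, 254, 255]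
def dC : List ℕ := [1, 2, 3, 4, 5, 6, 8, 9, 10, 11, 16, 17, 18, 20, 21, 22, 24, 32, 33, 34, 35, 36, 37, 40, 48, 50, 56, 64, 65, 66, 67, 68, 70, 72, 73, 96, 100, 104, 128, 129, 130, 132, 133, 134, 136, 138, 144, 145, 152]
def cdC : List ℕ := [1, 2, 3, 4, 5, 6, 8, 9, 10, 11, 16, 17, 18, 20, 21, 22, 24, 32, 33, 34, 35, 36, 37, 40, 48, 50, 56, 64, 65, 66, 67, 68, 70, 72, 73, 96, 100, 104, 128, 129, 130, 132, 133, 134, 136, 138, 144, 145, 152, 257, 258, 259, 260, 261, 262, 264, 265, 266, 267, 272, 273, 274, 276, 277, 278, 280, 288, 289, 290, 291, 292, 293, 296, 304, 306, 312, 320, 321, 322, 323, 324, 326, 328, 329, 352, 356, 360, 384, 385, 386, 388, 389, 390, 392, 394, 400, 401, 408, 256]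
def seqA : List (ℕ × ℕ) := [(127,255), (123,251), (126,254), (119,247), (245,253), (222,223), (187,191), (175,239), (171,235), (122,250), (186,190), (218,219), (158,159), (118,246), (91,95), (143,207), (206,238), (90,94), (87,215), (110,111), (151,183), (167,231), (242,243), (142,174), (47,63), (46,62), (30,31), (154,155), (229,237), (135,199), (78,79), (109,125), (124,252), (108,236), (14,15), (170,234), (23,55), (173,189), (106,107), (27,59), (248,249), (232,233), (86,214), (157,221), (172,188), (139,203), (198,230), (226,227), (54,182), (184,185), (39,103), (153,217), (178,179), (168,169), (26,58), (105,121), (156,220), (195,211), (228,244), (225,241), (212,213), (99,115), (177,181), (141,205), (57,61), (7,71), (53,117), (89,93), (42,43), (25,29), (224,240), (137,201), (140,204), (41,45), (196,197), (176,180), (13,77), (44,60), (28,92), (193,209), (52,116), (84,85), (12,76), (69,101), (97,113), (49,51), (81,83), (19,147), (131,163), (161,165), (162,166), (160,164), (38,102), (98,114), (82,210), (194,202), (208,216), (112,120), (80,88), (192,200), (74,75), (146,150), (148,149)]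
def seqB : List (ℕ × ℕ) := [(104,360), (11,267), (67,323), (73,329), (50,306), (152,408), (133,389), (21,277), (145,401), (35,291), (22,278), (100,356), (134,390), (70,326), (138,394), (56,312), (37,293), (24,280), (136,392), (5,261), (33,289), (66,322), (36,292), (10,266), (48,304), (96,352), (72,328), (3,259), (129,385), (20,276), (6,262), (17,273), (132,388), (34,290), (144,400), (40,296), (9,265), (18,274), (65,321), (130,386), (68,324), (4,260), (32,288), (16,272), (2,258), (128,384), (1,257), (8,264), (64,320)]
def h2W : List (ℕ × ℕ × ℕ) := [(1,3,5), (2,3,6), (3,11,35), (4,5,6), (5,21,37), (6,22,70), (8,9,10), (9,11,73), (10,11,138), (16,17,18), (17,21,145), (18,22,50), (20,21,22), (24,56,152), (32,33,34), (33,35,37), (34,35,50), (36,37,100), (40,56,104), (48,50,56), (64,65,66), (65,67,73), (66,67,70), (68,70,100), (72,73,104), (96,100,104), (128,129,130), (129,133,145), (130,134,138), (132,133,134), (136,138,152), (144,145,152)]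
set_option maxRecDepth 1000000 in
set_option maxHeartbeats 0 in
lemma okA : okL delta7C seqA = true := by decide
set_option maxRecDepth 1000000 in
set_option maxHeartbeats 0 in
lemma runA : runL delta7C seqA = dC := by decide
set_option maxRecDepth 1000000 in
set_option maxHeartbeats 0 in
lemma okB : okL cdC seqB = true := by decide
set_option maxRecDepth 1000000 in
set_option maxHeartbeats 0 in
lemma runB : runL cdC seqB = [256] := by decide
set_option maxRecDepth 1000000 in
set_option maxHeartbeats 0 in
lemma wfD : wfL dC = true := by decide
set_option maxRecDepth 1000000 in
set_option maxHeartbeats 0 in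
lemma wfCD : wfL cdC = true := by decide
set_option maxRecDepth 1000000 in
set_option maxHeartbeats 0 in
lemma wfDelta7 : wfL delta7C = true := by decide
end DunceAux
namespace DunceAux
open SComplex

variable {n : ℕ}

lemma realization_mono {K K' : SComplex (Fin n)} (h : K'.faces ⊆ K.faces) :
    K'.realization ⊆ K.realization := by
  rintro x ⟨h0, h1, s, hs, hsupp⟩
  exact ⟨h0, h1, s, h hs, hsupp⟩

lemma contractible_of_collapseStep {K K' : SComplex (Fin n)}
    (h : SComplex.CollapseStep K K') (hK : ContractibleSpace ↥(K.realization)) :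
    ContractibleSpace ↥(K'.realization) := by
  classical
  obtain ⟨σ, τ, ⟨hσK, hτK, hστ, hfree⟩, hfaces⟩ := h
  have hσsubτ : σ ⊆ τ := hστ.subset
  have hwne : (τ \ σ).Nonempty := by
    rw [Finset.sdiff_nonempty]
    exact fun hsub => hστ.ne (Finset.Subset.antisymm hσsubτ hsub)
  obtain ⟨w, hw⟩ := hwne
  have hwτ : w ∈ τ := (Finset.mem_sdiff.mp hw).1
  have hwσ : w ∉ σ := (Finset.mem_sdiff.mp hw).2
  have hσne : σ.Nonempty := K.nonempty_of_mem σ hσK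
  have hkey : ∀ ρ ∈ K.faces, σ ⊆ ρ → ρ = σ ∨ ρ = τ := by
    intro ρ hρ hsub
    rcases eq_or_ne ρ σ with he | he
    · exact Or.inl he
    · exact Or.inr (hfree ρ hρ (lt_of_le_of_ne hsub (Ne.symm he)))
  set k : ℝ := (σ.card : ℝ) with hk
  have hkpos : 0 < k := by
    rw [hk]
    exact_mod_cast Finset.card_pos.mpr hσne
  have hcpos : 0 < 1 / k := by positivity
  set p : Fin n → ℝ := fun v => if v = w then 2 else if v ∈ σ then -(1 / k) else 0 with hp
  have sumP : ∑ v, p v = 1 := by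
    have hsplit : ∀ v, p v = (if v = w then (2 : ℝ) else 0) + (if v ∈ σ then -(1 / k) else 0) := by
      intro v
      rw [hp]
      by_cases h1 : v = w
      · subst h1; simp [hwσ]
      · simp [h1]
    rw [Finset.sum_congr rfl (fun v _ => hsplit v), Finset.sum_add_distrib]
    have e1 : ∑ v : Fin n, (if v = w then (2 : ℝ) else 0) = 2 := by
      simp [Finset.sum_ite_eq']
    have e2 : ∑ v : Fin n, (if v ∈ σ then -(1 / k) else 0) = -1 := by
      rw [Finset.sum_ite_mem, Finset.univ_inter, Finset.sum_const, nsmul_eq_mul]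
      field_simp
      rw [hk]
    rw [e1, e2]; ring
  set m : (Fin n → ℝ) → ℝ := fun x => σ.inf' hσne x with hm
  set tf : (Fin n → ℝ) → ℝ := fun x => m x / (m x + 1 / k) with htf
  set r0 : (Fin n → ℝ) → (Fin n → ℝ) := fun x v => (1 - tf x) * x v + tf x * p v with hr0
  have hm_nonneg : ∀ x, x ∈ K.realization → 0 ≤ m x := by
    rintro x ⟨h0, _, _⟩
    exact Finset.le_inf' hσne _ (fun b _ => h0 b)
  have hdenom : ∀ x, 0 ≤ m x → 0 < m x + 1 / k := fun x hx => by linarith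
  have ht0 : ∀ x, 0 ≤ m x → 0 ≤ tf x := fun x hx => div_nonneg hx (le_of_lt (hdenom x hx))
  have ht1 : ∀ x, 0 ≤ m x → tf x < 1 := by
    intro x hx
    rw [htf]
    exact (div_lt_one (hdenom x hx)).mpr (by linarith)
  have htm : ∀ x, 0 ≤ m x → (1 - tf x) * m x - tf x * (1 / k) = 0 := by
    intro x hx
    have hne : m x + 1 / k ≠ 0 := ne_of_gt (hdenom x hx)
    rw [htf]
    field_simp
    ring
  have hfix0 : ∀ x s, (∀ v, (0:ℝ) ≤ x v) → (∀ v, x v ≠ 0 → v ∈ s) → ¬ σ ⊆ s → r0 x = x := by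
    intro x s h0 hsupp hns
    obtain ⟨u, huσ, hus⟩ := Finset.not_subset.mp hns
    have hxu : x u = 0 := by
      by_contra hxu
      exact hus (hsupp u hxu)
    have hmz : m x = 0 :=
      le_antisymm (hxu ▸ Finset.inf'_le _ huσ) (Finset.le_inf' hσne _ (fun b _ => h0 b))
    have htz : tf x = 0 := by rw [htf]; simp only; rw [hmz, zero_div]
    funext v
    rw [hr0]
    simp only [htz]
    ring
  -- membership of the retraction image
  have himage : ∀ x, x ∈ K.realization → r0 x ∈ K'.realization := by
    rintro x ⟨h0, h1, s, hs, hsupp⟩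
    have hmx : 0 ≤ m x := Finset.le_inf' hσne _ (fun b _ => h0 b)
    by_cases hσs : σ ⊆ s
    · -- support of x is inside τ
      have hsuppτ : ∀ v, x v ≠ 0 → v ∈ τ := by
        rcases hkey s hs hσs with rfl | rfl
        · exact fun v hv => hσsubτ (hsupp v hv)
        · exact hsupp
      obtain ⟨u₀, hu₀, hminf⟩ := Finset.exists_mem_eq_inf' hσne x
      have hxu₀ : x u₀ = m x := hminf.symm
      have htt0 := ht0 x hmx
      have htt1 := ht1 x hmx
      have httm := htm x hmx
      refine ⟨?_, ?_, τ.erase u₀, ?_, ?_⟩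
      · intro v
        show 0 ≤ (1 - tf x) * x v + tf x * p v
        rcases eq_or_ne v w with hvw | hvw
        · have hpw : p v = 2 := by rw [hp]; simp [hvw]
          rw [hpw]
          have := h0 v
          nlinarith
        · by_cases hvσ : v ∈ σ
          · have hpv : p v = -(1 / k) := by rw [hp]; simp [hvw, hvσ]
            rw [hpv]
            have hxv : m x ≤ x v := Finset.inf'_le _ hvσ
            nlinarith
          · have hpv : p v = 0 := by rw [hp]; simp [hvw, hvσ]
            rw [hpv]
            have := h0 v
            nlinarith
      · show ∑ v, ((1 - tf x) * x v + tf x * p v) = 1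
        rw [Finset.sum_add_distrib, ← Finset.mul_sum, ← Finset.mul_sum, h1, sumP]
        ring
      · -- τ.erase u₀ ∈ K'.faces
        rw [hfaces, Finset.mem_sdiff]
        constructor
        · refine K.down_closed τ hτK _ (Finset.erase_subset _ _) ⟨w, ?_⟩
          exact Finset.mem_erase.mpr ⟨fun he => hwσ (he ▸ hu₀), hwτ⟩
        · simp only [Finset.mem_insert, Finset.mem_singleton]
          push_neg
          constructor
          · intro he
            exact hwσ (he ▸ Finset.mem_erase.mpr ⟨fun h2 => hwσ (h2 ▸ hu₀), hwτ⟩)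
          · intro he
            have h3 : u₀ ∈ τ := hσsubτ hu₀
            rw [← he] at h3
            exact (Finset.mem_erase.mp h3).1 rfl
      · intro v hv
        have hv' : (1 - tf x) * x v + tf x * p v ≠ 0 := hv
        by_cases hvτ : v ∈ τ
        · rcases eq_or_ne v u₀ with rfl | hvu
          · exfalso
            apply hv'
            have hvw : ¬ v = w := fun he => hwσ (he ▸ hu₀)
            have hpv : p v = -(1 / k) := by rw [hp]; simp [hvw, hu₀]
            rw [hpv, hxu₀]
            linarith [httm]
          · exact Finset.mem_erase.mpr ⟨hvu, hvτ⟩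
        · exfalso
          apply hv'
          have hxv : x v = 0 := by
            by_contra hxv
            exact hvτ (hsuppτ v hxv)
          have hpv : p v = 0 := by
            have h1' : ¬ v = w := fun he => hvτ (he ▸ hwτ)
            have h2' : v ∉ σ := fun hvs => hvτ (hσsubτ hvs)
            rw [hp]; simp [h1', h2']
          rw [hxv, hpv]
          ring
    · -- identity case
      have heq : r0 x = x := hfix0 x s h0 hsupp hσs
      rw [heq]
      refine ⟨h0, h1, s, ?_, hsupp⟩
      rw [hfaces, Finset.mem_sdiff]
      refine ⟨hs, ?_⟩
      simp only [Finset.mem_insert, Finset.mem_singleton]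
      push_neg
      exact ⟨fun he => hσs (he ▸ Finset.Subset.refl σ), fun he => hσs (he ▸ hσsubτ)⟩
  have hfixK' : ∀ x, x ∈ K'.realization → r0 x = x := by
    rintro x ⟨h0, h1, s, hs, hsupp⟩
    rw [hfaces, Finset.mem_sdiff] at hs
    obtain ⟨hsK, hsn⟩ := hs
    simp only [Finset.mem_insert, Finset.mem_singleton] at hsn
    push_neg at hsn
    have hns : ¬ σ ⊆ s := by
      intro hsub
      rcases hkey s hsK hsub with he | he
      · exact hsn.1 he
      · exact hsn.2 he
    exact hfix0 x s h0 hsupp hns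
  -- continuous maps
  have hsub' : K'.realization ⊆ K.realization :=
    realization_mono (by rw [hfaces]; exact Finset.sdiff_subset)
  have cont_m : Continuous m := by
    rw [hm]
    exact Continuous.finset_inf'_apply hσne (fun i _ => continuous_apply i)
  have cont_tf : Continuous fun x : ↥(K.realization) => tf x.1 := by
    have cmv : Continuous fun x : ↥(K.realization) => m x.1 :=
      cont_m.comp continuous_subtype_val
    apply Continuous.div cmv (cmv.add continuous_const)
    intro x
    exact ne_of_gt (hdenom x.1 (hm_nonneg x.1 x.2))
  have cont_r0 : Continuous fun x : ↥(K.realization) => r0 x.1 := by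
    apply continuous_pi
    intro v
    simp only [hr0]
    exact ((continuous_const.sub cont_tf).mul
      ((continuous_apply v).comp continuous_subtype_val)).add (cont_tf.mul continuous_const)
  let rmap : C(↥(K.realization), ↥(K'.realization)) :=
    ⟨fun x => ⟨r0 x.1, himage x.1 x.2⟩, cont_r0.subtype_mk _⟩
  let imap : C(↥(K'.realization), ↥(K.realization)) :=
    ⟨fun x => ⟨x.1, hsub' x.2⟩, continuous_subtype_val.subtype_mk _⟩
  have hri : rmap.comp ((ContinuousMap.id _).comp imap) = ContinuousMap.id _ := by
    apply ContinuousMap.ext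
    intro y
    apply Subtype.ext
    exact hfixK' y.1 y.2
  rw [contractible_iff_id_nullhomotopic] at hK ⊢
  have h2 := (hK.comp_left imap).comp_right rmap
  rwa [hri] at h2

lemma contractible_of_collapsesTo {K L : SComplex (Fin n)}
    (h : SComplex.CollapsesTo K L) (hK : ContractibleSpace ↥(K.realization)) :
    ContractibleSpace ↥(L.realization) := by
  induction h with
  | refl => exact hK
  | tail hs hstep ih => exact contractible_of_collapseStep hstep ih

end DunceAux
namespace DunceAux
open SComplex

variable {V : Type} [DecidableEq V]

lemma card_eq_one_of_min {K : SComplex V} {f : Finset V → ℝ} (hf : K.IsDiscreteMorse f)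
    {σ₀ : Finset V} (hσ₀ : σ₀ ∈ K.faces) (hmin : ∀ ρ ∈ K.faces, f σ₀ ≤ f ρ)
    {σ : Finset V} (hσ : σ ∈ K.faces) (hfσ : f σ = f σ₀) : σ.card = 1 := by
  by_contra hc
  have h1 : 1 ≤ σ.card := Finset.card_pos.mpr (K.nonempty_of_mem σ hσ)
  have h2 : 2 ≤ σ.card := by omega
  obtain ⟨u, hu, v, hv, huv⟩ := Finset.one_lt_card.mp h2
  have herase : ∀ a ∈ σ, σ.erase a ∈ K.exitSet f σ := by
    intro a ha
    have hmem : σ.erase a ∈ K.faces := by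
      apply K.down_closed σ hσ _ (Finset.erase_subset _ _)
      rw [← Finset.card_pos, Finset.card_erase_of_mem ha]
      omega
    rw [exitSet, Finset.mem_filter]
    refine ⟨hmem, Or.inl ⟨Finset.erase_subset _ _, ?_, ?_⟩⟩
    · rw [Finset.card_erase_of_mem ha]; omega
    · rw [hfσ]; exact hmin _ hmem
  have hpair : ({σ.erase u, σ.erase v} : Finset (Finset V)) ⊆ K.exitSet f σ := by
    intro t ht
    rcases Finset.mem_insert.mp ht with rfl | ht
    · exact herase u hu
    · rw [Finset.mem_singleton.mp ht]; exact herase v hv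
  have hne : σ.erase u ≠ σ.erase v := by
    intro he
    have : v ∈ σ.erase u := Finset.mem_erase.mpr ⟨huv.symm, hv⟩
    rw [he] at this
    exact (Finset.mem_erase.mp this).1 rfl
  have hcard2 : 2 ≤ (K.exitSet f σ).card := by
    calc 2 = ({σ.erase u, σ.erase v} : Finset (Finset V)).card := (Finset.card_pair hne).symm
    _ ≤ _ := Finset.card_le_card hpair
  have := hf σ hσ
  omega

lemma min_critical {K : SComplex V} {f : Finset V → ℝ} (hf : K.IsDiscreteMorse f)
    {σ₀ : Finset V} (hσ₀ : σ₀ ∈ K.faces) (hmin : ∀ ρ ∈ K.faces, f σ₀ ≤ f ρ) :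
    K.exitSet f σ₀ = ∅ := by
  rw [Finset.eq_empty_iff_forall_notMem]
  intro τ hτ
  rw [exitSet, Finset.mem_filter] at hτ
  obtain ⟨hτf, hcase⟩ := hτ
  have hσ₀1 : σ₀.card = 1 := card_eq_one_of_min hf hσ₀ hmin hσ₀ rfl
  rcases hcase with ⟨_, hcard, _⟩ | ⟨_, hcard, hle⟩
  · have : τ.card = 0 := by omega
    rw [Finset.card_eq_zero] at this
    exact (Finset.nonempty_iff_ne_empty.mp (K.nonempty_of_mem τ hτf)) this
  · have hfeq : f τ = f σ₀ := le_antisymm hle (hmin τ hτf)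
    have := card_eq_one_of_min hf hσ₀ hmin hτf hfeq
    omega

lemma one_le_critCount {K : SComplex V} (hne : K.faces.Nonempty) {f : Finset V → ℝ}
    (hf : K.IsDiscreteMorse f) : 1 ≤ K.critCount f := by
  obtain ⟨σ₀, hσ₀, hmin⟩ := Finset.exists_min_image K.faces f hne
  rw [critCount]
  apply Finset.card_pos.mpr
  exact ⟨σ₀, Finset.mem_filter.mpr ⟨hσ₀, min_critical hf hσ₀ hmin⟩⟩

lemma two_le_critCount {K : SComplex V} (hne : K.faces.Nonempty)
    (Hc : ∀ s ∈ K.faces, s.card ≤ 3)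
    (H2 : ∀ s ∈ K.faces, s.card ≤ 2 → ∃ t₁ ∈ K.faces, ∃ t₂ ∈ K.faces,
      (s ⊆ t₁ ∧ s.card + 1 = t₁.card) ∧ (s ⊆ t₂ ∧ s.card + 1 = t₂.card) ∧ t₁ ≠ t₂)
    {f : Finset V → ℝ} (hf : K.IsDiscreteMorse f) : 2 ≤ K.critCount f := by
  obtain ⟨σ₀, hσ₀, hmin⟩ := Finset.exists_min_image K.faces f hne
  obtain ⟨σ₁, hσ₁, hmax⟩ := Finset.exists_max_image K.faces f hne
  have hmax3 : ∀ σ ∈ K.faces, f σ₁ ≤ f σ → σ.card = 3 := by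
    intro σ hσ hge
    by_contra hc
    have hle3 := Hc σ hσ
    have hle2 : σ.card ≤ 2 := by omega
    obtain ⟨t₁, ht₁, t₂, ht₂, ⟨hs₁, hc₁⟩, ⟨hs₂, hc₂⟩, htne⟩ := H2 σ hσ hle2
    have hmem : ∀ t ∈ K.faces, σ ⊆ t → σ.card + 1 = t.card → t ∈ K.exitSet f σ := by
      intro t ht hst hct
      rw [exitSet, Finset.mem_filter]
      exact ⟨ht, Or.inr ⟨hst, hct, le_trans (hmax t ht) hge⟩⟩
    have hpair : ({t₁, t₂} : Finset (Finset V)) ⊆ K.exitSet f σ := by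
      intro t ht
      rcases Finset.mem_insert.mp ht with rfl | ht
      · exact hmem t ht₁ hs₁ hc₁
      · rw [Finset.mem_singleton.mp ht]; exact hmem t₂ ht₂ hs₂ hc₂
    have hcard2 : 2 ≤ (K.exitSet f σ).card := by
      calc 2 = ({t₁, t₂} : Finset (Finset V)).card := (Finset.card_pair htne).symm
      _ ≤ _ := Finset.card_le_card hpair
    have := hf σ hσ
    omega
  have hσ₁3 : σ₁.card = 3 := hmax3 σ₁ hσ₁ (le_refl _)
  have hcrit₁ : K.exitSet f σ₁ = ∅ := by
    rw [Finset.eq_empty_iff_forall_notMem]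
    intro τ hτ
    rw [exitSet, Finset.mem_filter] at hτ
    obtain ⟨hτf, hcase⟩ := hτ
    rcases hcase with ⟨_, hcard, hle⟩ | ⟨_, hcard, _⟩
    · have := hmax3 τ hτf hle
      omega
    · have := Hc τ hτf
      omega
  have hσ₀1 : σ₀.card = 1 := card_eq_one_of_min hf hσ₀ hmin hσ₀ rfl
  have hcrit₀ : K.exitSet f σ₀ = ∅ := min_critical hf hσ₀ hmin
  have hne01 : σ₀ ≠ σ₁ := fun he => by rw [he, hσ₁3] at hσ₀1; omega
  have hpair : ({σ₀, σ₁} : Finset (Finset V)) ⊆ K.critSet f := by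
    intro t ht
    rcases Finset.mem_insert.mp ht with rfl | ht
    · exact Finset.mem_filter.mpr ⟨hσ₀, hcrit₀⟩
    · rw [Finset.mem_singleton.mp ht]
      exact Finset.mem_filter.mpr ⟨hσ₁, hcrit₁⟩
  calc 2 = ({σ₀, σ₁} : Finset (Finset V)).card := (Finset.card_pair hne01).symm
  _ ≤ _ := Finset.card_le_card hpair

/-- the dimension function is a discrete Morse function with empty exit sets -/
lemma cardFun_exit (K : SComplex V) (σ : Finset V) :
    K.exitSet (fun s => (s.card : ℝ)) σ = ∅ := by
  rw [Finset.eq_empty_iff_forall_notMem]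
  intro τ hτ
  rw [exitSet, Finset.mem_filter] at hτ
  obtain ⟨hτf, hcase⟩ := hτ
  rcases hcase with ⟨_, hcard, hle⟩ | ⟨_, hcard, hle⟩ <;>
    · have := Nat.cast_le.mp (hle : ((_ : ℕ) : ℝ) ≤ _)
      omega

lemma cardFun_morse (K : SComplex V) : K.IsDiscreteMorse (fun s => (s.card : ℝ)) := by
  intro σ hσ
  rw [cardFun_exit]
  simp

lemma M_mem (K : SComplex V) : ∃ f, K.IsDiscreteMorse f ∧ K.critCount f = K.M := by
  have hS : {n | ∃ f, K.IsDiscreteMorse f ∧ K.critCount f = n}.Nonempty :=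
    ⟨_, _, cardFun_morse K, rfl⟩
  exact Nat.sInf_mem hS

lemma one_le_M {K : SComplex V} (hne : K.faces.Nonempty) : 1 ≤ K.M := by
  obtain ⟨f, hf, hc⟩ := M_mem K
  rw [← hc]
  exact one_le_critCount hne hf

lemma two_le_M {K : SComplex V} (hne : K.faces.Nonempty)
    (Hc : ∀ s ∈ K.faces, s.card ≤ 3)
    (H2 : ∀ s ∈ K.faces, s.card ≤ 2 → ∃ t₁ ∈ K.faces, ∃ t₂ ∈ K.faces,
      (s ⊆ t₁ ∧ s.card + 1 = t₁.card) ∧ (s ⊆ t₂ ∧ s.card + 1 = t₂.card) ∧ t₁ ≠ t₂) :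
    2 ≤ K.M := by
  obtain ⟨f, hf, hc⟩ := M_mem K
  rw [← hc]
  exact two_le_critCount hne Hc H2 hf

lemma M_le {K : SComplex V} {f : Finset V → ℝ} (hf : K.IsDiscreteMorse f) {c : ℕ}
    (hc : K.critCount f = c) : K.M ≤ c :=
  Nat.sInf_le ⟨f, hf, hc⟩

end DunceAux
namespace DunceAux
open SComplex

/-- the cone Morse function -/
noncomputable def coneF (a : Fin 9) : Finset (Fin 9) → ℝ :=
  fun s => ((s.erase a).card : ℝ) - (if a ∈ s then 1/2 else 0)

section ConeMorse

variable {K : SComplex (Fin 9)} {a : Fin 9}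

lemma coneF_notmem {s : Finset (Fin 9)} (h : a ∉ s) : coneF a s = (s.card : ℝ) := by
  rw [coneF, Finset.erase_eq_of_notMem h, if_neg h]
  ring

lemma coneF_mem {s : Finset (Fin 9)} (h : a ∈ s) :
    coneF a s = ((s.erase a).card : ℝ) - 1/2 := by
  rw [coneF, if_pos h]

lemma cone_exit₁ (hins : ∀ s ∈ K.faces, insert a s ∈ K.faces)
    {σ : Finset (Fin 9)} (hσ : σ ∈ K.faces) (ha : a ∉ σ) :
    K.exitSet (coneF a) σ = {insert a σ} := by
  ext τ
  rw [exitSet, Finset.mem_filter, Finset.mem_singleton]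
  constructor
  · rintro ⟨hτf, ⟨hsub, hcard, hle⟩ | ⟨hsub, hcard, hle⟩⟩
    · exfalso
      have haτ : a ∉ τ := fun h => ha (hsub h)
      rw [coneF_notmem ha, coneF_notmem haτ] at hle
      have := Nat.cast_le.mp hle
      omega
    · by_cases haτ : a ∈ τ
      · have hsub2 : insert a σ ⊆ τ := Finset.insert_subset haτ hsub
        have hcard2 : (insert a σ).card = τ.card := by
          rw [Finset.card_insert_of_notMem ha]
          omega
        exact (Finset.eq_of_subset_of_card_le hsub2 (le_of_eq hcard2.symm)).symm
      · exfalso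
        rw [coneF_notmem ha, coneF_notmem haτ] at hle
        have := Nat.cast_le.mp hle
        omega
  · rintro rfl
    refine ⟨hins σ hσ, Or.inr ⟨Finset.subset_insert a σ, ?_, ?_⟩⟩
    · rw [Finset.card_insert_of_notMem ha]
    · rw [coneF_notmem ha, coneF_mem (Finset.mem_insert_self a σ),
        Finset.erase_insert ha]
      linarith

lemma cone_exit₂ {σ : Finset (Fin 9)} (hσ : σ ∈ K.faces) (ha : a ∈ σ)
    (hne : σ ≠ {a}) : K.exitSet (coneF a) σ = {σ.erase a} := by
  have herne : (σ.erase a).Nonempty := by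
    rw [Finset.nonempty_iff_ne_empty]
    intro he
    apply hne
    apply Finset.Subset.antisymm
    · intro v hv
      rcases eq_or_ne v a with rfl | hva
      · exact Finset.mem_singleton_self v
      · exfalso
        have : v ∈ σ.erase a := Finset.mem_erase.mpr ⟨hva, hv⟩
        rw [he] at this
        exact absurd this (Finset.notMem_empty v)
    · exact Finset.singleton_subset_iff.mpr ha
  have hcardσ : σ.card = (σ.erase a).card + 1 := by
    rw [Finset.card_erase_of_mem ha]
    have : 1 ≤ σ.card := Finset.card_pos.mpr ⟨a, ha⟩
    omega
  ext τ
  rw [exitSet, Finset.mem_filter, Finset.mem_singleton]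
  constructor
  · rintro ⟨hτf, ⟨hsub, hcard, hle⟩ | ⟨hsub, hcard, hle⟩⟩
    · by_cases haτ : a ∈ τ
      · exfalso
        rw [coneF_mem ha, coneF_mem haτ] at hle
        have h2 : ((σ.erase a).card : ℝ) ≤ (τ.erase a).card := by linarith
        have h3 := Nat.cast_le.mp h2
        have h4 : (τ.erase a).card + 1 = τ.card := by
          rw [Finset.card_erase_of_mem haτ]
          have : 1 ≤ τ.card := Finset.card_pos.mpr ⟨a, haτ⟩
          omega
        omega
      · have hsub2 : τ ⊆ σ.erase a := fun v hv =>
          Finset.mem_erase.mpr ⟨fun he => haτ (he ▸ hv), hsub hv⟩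
        apply Finset.eq_of_subset_of_card_le hsub2
        omega
    · exfalso
      have haτ : a ∈ τ := hsub ha
      rw [coneF_mem ha, coneF_mem haτ] at hle
      have h2 : ((τ.erase a).card : ℝ) ≤ (σ.erase a).card := by linarith
      have h3 := Nat.cast_le.mp h2
      have h4 : (τ.erase a).card + 1 = τ.card := by
        rw [Finset.card_erase_of_mem haτ]
        have : 1 ≤ τ.card := Finset.card_pos.mpr ⟨a, haτ⟩
        omega
      omega
  · rintro rfl
    refine ⟨K.down_closed σ hσ _ (Finset.erase_subset _ _) herne,
      Or.inl ⟨Finset.erase_subset _ _, by omega, ?_⟩⟩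
    rw [coneF_mem ha, coneF_notmem (Finset.notMem_erase a σ)]
    linarith

lemma cone_exit₃ : K.exitSet (coneF a) {a} = ∅ := by
  rw [Finset.eq_empty_iff_forall_notMem]
  intro τ hτ
  rw [exitSet, Finset.mem_filter] at hτ
  obtain ⟨hτf, hcase⟩ := hτ
  rcases hcase with ⟨hsub, hcard, hle⟩ | ⟨hsub, hcard, hle⟩
  · rw [Finset.card_singleton] at hcard
    have : τ.card = 0 := by omega
    rw [Finset.card_eq_zero] at this
    exact (Finset.nonempty_iff_ne_empty.mp (K.nonempty_of_mem τ hτf)) this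
  · have haτ : a ∈ τ := hsub (Finset.mem_singleton_self a)
    rw [Finset.card_singleton] at hcard
    rw [coneF_mem haτ, coneF_mem (Finset.mem_singleton_self a), Finset.erase_singleton] at hle
    have h4 : (τ.erase a).card + 1 = τ.card := by
      rw [Finset.card_erase_of_mem haτ]
      have : 1 ≤ τ.card := Finset.card_pos.mpr ⟨a, haτ⟩
      omega
    have h5 : (τ.erase a).card = 1 := by omega
    rw [h5] at hle
    norm_num at hle

lemma cone_morse (hins : ∀ s ∈ K.faces, insert a s ∈ K.faces) : K.IsDiscreteMorse (coneF a) := by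
  intro σ hσ
  by_cases ha : a ∈ σ
  · rcases eq_or_ne σ {a} with rfl | hne
    · rw [cone_exit₃]; simp
    · rw [cone_exit₂ hσ ha hne]; simp
  · rw [cone_exit₁ hins hσ ha]; simp

lemma cone_critSet (hins : ∀ s ∈ K.faces, insert a s ∈ K.faces) (haK : ({a} : Finset (Fin 9)) ∈ K.faces) :
    K.critSet (coneF a) = {({a} : Finset (Fin 9))} := by
  ext σ
  rw [critSet, Finset.mem_filter, Finset.mem_singleton]
  constructor
  · rintro ⟨hσ, hexit⟩
    by_cases ha : a ∈ σ
    · rcases eq_or_ne σ {a} with rfl | hne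
      · rfl
      · rw [cone_exit₂ hσ ha hne] at hexit
        exact absurd hexit (Finset.singleton_ne_empty _)
    · rw [cone_exit₁ hins hσ ha] at hexit
      exact absurd hexit (Finset.singleton_ne_empty _)
  · rintro rfl
    exact ⟨haK, cone_exit₃⟩

lemma cone_critCount (hins : ∀ s ∈ K.faces, insert a s ∈ K.faces) (haK : ({a} : Finset (Fin 9)) ∈ K.faces) :
    K.critCount (coneF a) = 1 := by
  rw [critCount, cone_critSet hins haK, Finset.card_singleton]

end ConeMorse
end DunceAux
namespace DunceAux
open SComplex

/-! ### the three complexes -/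

def Kdelta : SComplex (Fin 9) := mkC delta7C wfDelta7
def K1 : SComplex (Fin 9) := mkC dC wfD
def K2 : SComplex (Fin 9) := mkC cdC wfCD

set_option maxRecDepth 1000000 in
set_option maxHeartbeats 1000000 in
lemma testBit256 : ∀ v : Fin 9, (Nat.testBit 256 v.val) = decide (v = 8) := by decide

lemma insert_dec (c : ℕ) : insert (8 : Fin 9) (dec c) = dec (c ||| 256) := by
  ext v
  rw [Finset.mem_insert, mem_dec, mem_dec, Nat.testBit_or, Bool.or_eq_true, testBit256]
  rcases eq_or_ne v 8 with rfl | hv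
  · simp
  · simp [hv]

set_option maxRecDepth 1000000 in
set_option maxHeartbeats 2000000 in
lemma cdC_or : ∀ c ∈ cdC, (c ||| 256) ∈ cdC := by decide

lemma K2_hins : ∀ s ∈ K2.faces, insert (8 : Fin 9) s ∈ K2.faces := by
  intro s hs
  obtain ⟨c, hcL, rfl⟩ := mem_toF.mp hs
  rw [insert_dec]
  exact mem_toF.mpr ⟨c ||| 256, cdC_or c hcL, rfl⟩

set_option maxRecDepth 1000000 in
set_option maxHeartbeats 2000000 in
lemma mem256 : (256 : ℕ) ∈ cdC := by decide

set_option maxRecDepth 1000000 in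
lemma dec256 : dec 256 = ({8} : Finset (Fin 9)) := by decide

lemma K2_apex : ({(8:Fin 9)} : Finset (Fin 9)) ∈ K2.faces :=
  dec256 ▸ mem_toF.mpr ⟨256, mem256, rfl⟩

/-! ### realization of the full 7-simplex is convex -/

def S7 : Set (Fin 9 → ℝ) := {x | (∀ v, 0 ≤ x v) ∧ (∑ v, x v) = 1 ∧ x 8 = 0}

set_option maxRecDepth 1000000 in
set_option maxHeartbeats 2000000 in
lemma delta7_lt256 : ∀ c ∈ delta7C, c < 256 := by decide

set_option maxRecDepth 1000000 in
set_option maxHeartbeats 2000000 in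
lemma mem255 : (255 : ℕ) ∈ delta7C := by decide

set_option maxRecDepth 1000000 in
lemma mem_dec255 : ∀ v : Fin 9, v ≠ 8 → v ∈ dec 255 := by decide

lemma realization_delta : Kdelta.realization = S7 := by
  ext x
  constructor
  · rintro ⟨h0, h1, s, hs, hsupp⟩
    obtain ⟨c, hcL, rfl⟩ := mem_toF.mp hs
    refine ⟨h0, h1, ?_⟩
    by_contra h8
    have hmem := hsupp 8 h8
    rw [mem_dec] at hmem
    rw [Nat.testBit_lt_two_pow (delta7_lt256 c hcL)] at hmem
    exact Bool.false_ne_true hmem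
  · rintro ⟨h0, h1, h8⟩
    refine ⟨h0, h1, dec 255, mem_toF.mpr ⟨255, mem255, rfl⟩, ?_⟩
    intro v hv
    have hv8 : v ≠ 8 := fun he => hv (he ▸ h8)
    exact mem_dec255 v hv8

lemma convex_S7 : Convex ℝ S7 := by
  rintro x ⟨hx0, hx1, hx8⟩ y ⟨hy0, hy1, hy8⟩ a b ha hb hab
  refine ⟨?_, ?_, ?_⟩
  · intro v
    simp only [Pi.add_apply, Pi.smul_apply, smul_eq_mul]
    exact add_nonneg (mul_nonneg ha (hx0 v)) (mul_nonneg hb (hy0 v))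
  · simp only [Pi.add_apply, Pi.smul_apply, smul_eq_mul]
    rw [Finset.sum_add_distrib, ← Finset.mul_sum, ← Finset.mul_sum, hx1, hy1]
    linarith
  · simp only [Pi.add_apply, Pi.smul_apply, smul_eq_mul]
    rw [hx8, hy8]
    ring

lemma S7_nonempty : S7.Nonempty := by
  refine ⟨fun v => if v = 0 then 1 else 0, ?_, ?_, ?_⟩
  · intro v; positivity
  · simp [Finset.sum_ite_eq']
  · simp

lemma contractible_delta : ContractibleSpace ↥(Kdelta.realization) := by
  rw [realization_delta]
  exact convex_S7.contractibleSpace S7_nonempty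

/-! ### collapse chains -/

lemma collapses_delta_K1 : Kdelta.CollapsesTo K1 := by
  apply collapsesTo_of_okL seqA Kdelta delta7C rfl (wfL_bdd wfDelta7) okA
  rw [runA]
  rfl

lemma contractible_K1 : ContractibleSpace ↥(K1.realization) :=
  contractible_of_collapsesTo collapses_delta_K1 contractible_delta

set_option maxRecDepth 1000000 in
lemma toF256 : toF [256] = ({({8} : Finset (Fin 9))} : Finset (Finset (Fin 9))) := by decide

lemma collapsible_K2 : K2.Collapsible := by
  refine ⟨8, collapsesTo_of_okL seqB K2 cdC rfl (wfL_bdd wfCD) okB (SComplex.pt 8) ?_⟩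
  rw [runB, toF256]
  rfl

/-! ### star-convexity of the cone realization -/

noncomputable def e8 : Fin 9 → ℝ := fun v => if v = 8 then 1 else 0

lemma e8_mem : e8 ∈ K2.realization := by
  refine ⟨?_, ?_, ({8} : Finset (Fin 9)), K2_apex, ?_⟩
  · intro v; simp only [e8]; positivity
  · simp only [e8]; simp [Finset.sum_ite_eq']
  · intro v hv
    simp only [e8] at hv
    rcases eq_or_ne v 8 with rfl | hne
    · exact Finset.mem_singleton_self _
    · simp [hne] at hv

lemma starconvex_K2 : StarConvex ℝ e8 K2.realization := by
  rintro y ⟨hy0, hy1, s, hs, hsupp⟩ a b ha hb hab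
  refine ⟨?_, ?_, insert 8 s, K2_hins s hs, ?_⟩
  · intro v
    simp only [Pi.add_apply, Pi.smul_apply, smul_eq_mul]
    have : (0:ℝ) ≤ e8 v := by simp only [e8]; positivity
    exact add_nonneg (mul_nonneg ha this) (mul_nonneg hb (hy0 v))
  · simp only [Pi.add_apply, Pi.smul_apply, smul_eq_mul]
    rw [Finset.sum_add_distrib, ← Finset.mul_sum, ← Finset.mul_sum, hy1]
    have : ∑ v, e8 v = 1 := by simp only [e8]; simp [Finset.sum_ite_eq']
    rw [this]
    linarith
  · intro v hv
    simp only [Pi.add_apply, Pi.smul_apply, smul_eq_mul] at hv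
    rcases eq_or_ne v 8 with rfl | hne
    · exact Finset.mem_insert_self _ _
    · apply Finset.mem_insert_of_mem
      apply hsupp
      intro hyv
      apply hv
      have : e8 v = 0 := by simp only [e8]; simp [hne]
      rw [this, hyv]
      ring

lemma contractible_K2 : ContractibleSpace ↥(K2.realization) :=
  starconvex_K2.contractibleSpace ⟨e8, e8_mem⟩

/-! ### the point complex -/

noncomputable def e0 : Fin 9 → ℝ := fun v => if v = 0 then 1 else 0

lemma realization_pt : (SComplex.pt (0 : Fin 9)).realization = {e0} := by
  ext x
  constructor
  · rintro ⟨h0, h1, s, hs, hsupp⟩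
    have hs' : s = {0} := by
      simpa [SComplex.pt] using hs
    subst hs'
    have hzero : ∀ v : Fin 9, v ≠ 0 → x v = 0 := by
      intro v hv
      by_contra hxv
      exact hv (Finset.mem_singleton.mp (hsupp v hxv))
    have hx0 : x 0 = 1 := by
      rw [← h1]
      rw [Finset.sum_eq_single 0 (fun v _ hv => hzero v hv) (by simp)]
    rw [Set.mem_singleton_iff]
    funext v
    rcases eq_or_ne v 0 with rfl | hv
    · simp only [e0, if_pos rfl]; exact hx0
    · simp only [e0, if_neg hv]; exact hzero v hv
  · rintro rfl
    refine ⟨?_, ?_, {0}, by simp [SComplex.pt], ?_⟩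
    · intro v; simp only [e0]; positivity
    · simp only [e0]; simp [Finset.sum_ite_eq']
    · intro v hv
      simp only [e0] at hv
      rcases eq_or_ne v 0 with rfl | hne
      · exact Finset.mem_singleton_self _
      · simp [hne] at hv

lemma contractible_pt : ContractibleSpace ↥((SComplex.pt (0 : Fin 9)).realization) := by
  rw [realization_pt]
  exact (convex_singleton e0).contractibleSpace ⟨e0, rfl⟩

end DunceAux
namespace DunceAux
open SComplex

set_option maxRecDepth 1000000 in
set_option maxHeartbeats 2000000 in
lemma mem1 : (1 : ℕ) ∈ dC := by decide

set_option maxRecDepth 1000000 in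
lemma dec1 : dec 1 = ({0} : Finset (Fin 9)) := by decide

lemma K1_ne : K1.faces.Nonempty := ⟨dec 1, mem_toF.mpr ⟨1, mem1, rfl⟩⟩

set_option maxRecDepth 1000000 in
set_option maxHeartbeats 4000000 in
lemma HcK1 : ∀ s ∈ K1.faces, s.card ≤ 3 := by decide

set_option maxRecDepth 1000000 in
set_option maxHeartbeats 4000000 in
lemma h2a : ∀ t ∈ h2W, t.2.1 ∈ dC ∧ t.2.2 ∈ dC ∧ (dec t.1 ⊆ dec t.2.1) ∧
    (dec t.1 ⊆ dec t.2.2) ∧ ((dec t.1).card + 1 = (dec t.2.1).card) ∧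
    ((dec t.1).card + 1 = (dec t.2.2).card) ∧ dec t.2.1 ≠ dec t.2.2 := by decide

set_option maxRecDepth 1000000 in
set_option maxHeartbeats 4000000 in
lemma h2cov : ∀ c ∈ dC, (dec c).card ≤ 2 → ∃ t ∈ h2W, t.1 = c := by decide

lemma H2K1 : ∀ s ∈ K1.faces, s.card ≤ 2 → ∃ t₁ ∈ K1.faces, ∃ t₂ ∈ K1.faces,
    (s ⊆ t₁ ∧ s.card + 1 = t₁.card) ∧ (s ⊆ t₂ ∧ s.card + 1 = t₂.card) ∧ t₁ ≠ t₂ := by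
  intro s hs hcard
  obtain ⟨c, hcL, rfl⟩ := mem_toF.mp hs
  obtain ⟨t, htW, ht1⟩ := h2cov c hcL hcard
  obtain ⟨hm1, hm2, hs1, hs2, hc1, hc2, hne⟩ := h2a t htW
  subst ht1
  exact ⟨dec t.2.1, mem_toF.mpr ⟨t.2.1, hm1, rfl⟩, dec t.2.2, mem_toF.mpr ⟨t.2.2, hm2, rfl⟩,
    ⟨hs1, hc1⟩, ⟨hs2, hc2⟩, hne⟩

lemma two_le_M_K1 : 2 ≤ K1.M := two_le_M K1_ne HcK1 H2K1

lemma nofree_K1 : ∀ σ τ : Finset (Fin 9), ¬ K1.IsFreePair σ τ := by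
  rintro σ τ ⟨hσ, hτ, hστ, hfree⟩
  rcases le_or_gt σ.card 2 with hle | hgt
  · obtain ⟨t₁, ht₁, t₂, ht₂, ⟨hs1, hc1⟩, ⟨hs2, hc2⟩, hne⟩ := H2K1 σ hσ hle
    have hp1 : σ ⊂ t₁ := lt_of_le_of_ne hs1 (fun he => by rw [he] at hc1; omega)
    have hp2 : σ ⊂ t₂ := lt_of_le_of_ne hs2 (fun he => by rw [he] at hc2; omega)
    exact hne ((hfree t₁ ht₁ hp1).trans (hfree t₂ ht₂ hp2).symm)
  · have h1 := HcK1 σ hσ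
    have h2 := HcK1 τ hτ
    have h3 := Finset.card_lt_card hστ
    omega

set_option maxRecDepth 1000000 in
set_option maxHeartbeats 4000000 in
lemma K1_card : K1.faces.card = 49 := by decide

lemma not_collapsible_K1 : ¬ K1.Collapsible := by
  rintro ⟨v, hc⟩
  rcases Relation.ReflTransGen.cases_head hc with heq | ⟨K', hstep, _⟩
  · have h1 := congrArg (fun K : SComplex (Fin 9) => K.faces.card) heq
    rw [K1_card] at h1
    have h2 : (SComplex.pt v).faces.card = 1 := Finset.card_singleton _
    omega
  · obtain ⟨σ, τ, hfp, _⟩ := hstep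
    exact nofree_K1 σ τ hfp

/-! ### the M values -/

lemma M_pt : (SComplex.pt (0 : Fin 9)).M = 1 := by
  apply le_antisymm
  · apply M_le (cardFun_morse _)
    rw [critCount, critSet, Finset.filter_true_of_mem (fun σ _ => cardFun_exit _ σ)]
    rfl
  · exact one_le_M ⟨{0}, by simp [SComplex.pt]⟩

lemma M_K2 : K2.M = 1 := by
  apply le_antisymm
  · exact M_le (cone_morse K2_hins) (cone_critCount K2_hins K2_apex)
  · exact one_le_M ⟨{8}, K2_apex⟩

/-! ### inclusions -/

set_option maxRecDepth 1000000 in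
set_option maxHeartbeats 4000000 in
lemma dC_sub_cdC : ∀ c ∈ dC, c ∈ cdC := by decide

lemma K0_sub_K1 : (SComplex.pt (0 : Fin 9)).faces ⊆ K1.faces := by
  intro s hs
  have : s = ({0} : Finset (Fin 9)) := by simpa [SComplex.pt] using hs
  subst this
  exact dec1 ▸ mem_toF.mpr ⟨1, mem1, rfl⟩

lemma K1_sub_K2 : K1.faces ⊆ K2.faces := by
  intro s hs
  obtain ⟨c, hcL, rfl⟩ := mem_toF.mp hs
  exact mem_toF.mpr ⟨c, dC_sub_cdC c hcL, rfl⟩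

end DunceAux

/-- there is a filtration `K₀ ⊂ K₁ ⊂ K₂` (a vertex of the Dunce
hat, the Dunce hat, and its cone) of contractible — hence homologically
point-like — complexes whose Morse complexity profile `(1, ≥2, 1)` is
non-constant. -/
theorem exists_nonconstant_morse_profile :
    ∃ (n : ℕ) (K₀ K₁ K₂ : SComplex (Fin n)),
      K₀.faces ⊆ K₁.faces ∧ K₁.faces ⊆ K₂.faces ∧
      (∃ v : Fin n, K₀.faces = {({v} : Finset (Fin n))}) ∧
      ContractibleSpace ↥(K₀.realization) ∧
      ContractibleSpace ↥(K₁.realization) ∧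
      ContractibleSpace ↥(K₂.realization) ∧
      ¬ K₁.Collapsible ∧ K₂.Collapsible ∧
      K₀.M = 1 ∧ 2 ≤ K₁.M ∧ K₂.M = 1 := by
  refine ⟨9, SComplex.pt 0, DunceAux.K1, DunceAux.K2, DunceAux.K0_sub_K1,
    DunceAux.K1_sub_K2, ⟨0, rfl⟩, DunceAux.contractible_pt, DunceAux.contractible_K1,
    DunceAux.contractible_K2, DunceAux.not_collapsible_K1, DunceAux.collapsible_K2,
    DunceAux.M_pt, DunceAux.two_le_M_K1, DunceAux.M_K2⟩
end

section
/- Let K_• and L_• be ε-interleaved filtrations on a torsion-eligible window, with interleaving maps φ_t: K_t → L_{t+ε} that are homotopy equivalences satisfying φ_t ∘ ι^K_{s,t} ≃ ι^L_{s+ε,t+ε} ∘ φ_s. Assume all induced maps on Whitehead groups are the identity (fundamental groups identified with a fixed G, inner automorphisms acting trivially). Then τ^K_{s,t} − τ^L_{s+ε,t+ε} = τ(φ_s) − τ(φ_t) for all s ≤ t; hence the persistent torsion cocycles of K_• and L_• define the same class in H^1(P(J); Wh(G)). -/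
/-- a continuous map is a homotopy equivalence -/
def IsHtpyEquiv {X Y : Type} [TopologicalSpace X] [TopologicalSpace Y] (f : C(X, Y)) : Prop :=
  ∃ g : C(Y, X), (g.comp f).Homotopic (ContinuousMap.id X) ∧
    (f.comp g).Homotopic (ContinuousMap.id Y)
/-- comparable pairs in a poset -/
def torPairs (P : Type) [PartialOrder P] : Type := {p : P × P // p.1 ≤ p.2}

/-- 1-cocycles on the nerve of the poset `P` with coefficients in `A`:
functions on comparable pairs satisfying `τ s u = τ t u + τ s t`. -/
def Zgrp (P A : Type) [PartialOrder P] [AddCommGroup A] : AddSubgroup (torPairs P → A) where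
  carrier := {τ | ∀ (s t u : P) (h1 : s ≤ t) (h2 : t ≤ u),
    τ ⟨(s, u), h1.trans h2⟩ = τ ⟨(t, u), h2⟩ + τ ⟨(s, t), h1⟩}
  zero_mem' := by intro s t u h1 h2; exact (add_zero (0 : A)).symm
  add_mem' := by
    intro a b ha hb s t u h1 h2
    have h3 := ha s t u h1 h2
    have h4 := hb s t u h1 h2
    show a _ + b _ = (a _ + b _) + (a _ + b _)
    rw [h3, h4]; abel
  neg_mem' := by
    intro a ha s t u h1 h2
    have h3 := ha s t u h1 h2
    show -a _ = -a _ + -a _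
    rw [h3]; abel

/-- 1-coboundaries: `τ (s ≤ t) = a s - a t`. -/
def Bgrp (P A : Type) [PartialOrder P] [AddCommGroup A] : AddSubgroup (torPairs P → A) where
  carrier := {τ | ∃ a : P → A, ∀ p : torPairs P, τ p = a p.1.1 - a p.1.2}
  zero_mem' := ⟨0, by intro p; simp⟩
  add_mem' := by
    rintro x y ⟨a, ha⟩ ⟨b, hb⟩
    exact ⟨a + b, by intro p; simp only [Pi.add_apply, ha p, hb p]; abel⟩
  neg_mem' := by
    rintro x ⟨a, ha⟩
    exact ⟨-a, by intro p; simp only [Pi.neg_apply, ha p]; abel⟩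

/-- first cohomology of (the nerve of) the poset `P` with constant coefficients `A` -/
def H1 (P A : Type) [PartialOrder P] [AddCommGroup A] : Type :=
  Zgrp P A ⧸ (Bgrp P A).addSubgroupOf (Zgrp P A)

/-- interleaving invariance of persistent torsion.  For
ε-interleaved filtrations with interleaving maps `φ_t` that are homotopy
equivalences and homotopy-compatible with the inclusions, one has
`τ^K_{s,t} − τ^L_{s+ε,t+ε} = τ(φ_s) − τ(φ_t)`; hence the persistent torsion
cocycles define the same class in `H¹(P; Wh G)` (Whitehead groups identified
with a fixed `A = Wh G`, induced maps acting as the identity). -/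
theorem persistent_torsion_interleaving_invariance
    {K L : ℝ → Type} [∀ t, TopologicalSpace (K t)] [∀ t, TopologicalSpace (L t)]
    {A : Type} [AddCommGroup A] (ε : ℝ) (hε : 0 ≤ ε)
    (ιK : ∀ s t : ℝ, s ≤ t → C(K s, K t)) (ιL : ∀ s t : ℝ, s ≤ t → C(L s, L t))
    -- torsion-eligible window: all inclusions are homotopy equivalences
    (hιK : ∀ s t (hst : s ≤ t), IsHtpyEquiv (ιK s t hst))
    (hιL : ∀ s t (hst : s ≤ t), IsHtpyEquiv (ιL s t hst))
    -- interleaving maps, homotopy equivalences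
    (φ : ∀ t : ℝ, C(K t, L (t + ε))) (hφ : ∀ t, IsHtpyEquiv (φ t))
    -- abstract Whitehead torsion with values in `A = Wh G`
    (τKK : ∀ s t : ℝ, C(K s, K t) → A) (τLL : ∀ s t : ℝ, C(L s, L t) → A)
    (τKL : ∀ s t : ℝ, C(K s, L t) → A)
    (τ_htpy : ∀ s t (g g' : C(K s, L t)), g.Homotopic g' → τKL s t g = τKL s t g')
    -- composition formulas, induced maps acting as the identity
    (comp_φ : ∀ s t (hst : s ≤ t),
      τKL s (t + ε) ((φ t).comp (ιK s t hst)) =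
        τKL t (t + ε) (φ t) + τKK s t (ιK s t hst))
    (comp_ι : ∀ s t (hst : s ≤ t),
      τKL s (t + ε) ((ιL (s + ε) (t + ε) (by linarith)).comp (φ s)) =
        τLL (s + ε) (t + ε) (ιL (s + ε) (t + ε) (by linarith)) + τKL s (s + ε) (φ s))
    -- compatibility of the interleaving maps with the filtrations up to homotopy
    (hsq : ∀ s t (hst : s ≤ t),
      ((φ t).comp (ιK s t hst)).Homotopic
        ((ιL (s + ε) (t + ε) (by linarith)).comp (φ s)))
    -- the persistent torsion cocycles of `K` and of (the ε-shift of) `L`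
    (hZK : (fun p : torPairs ℝ => τKK p.1.1 p.1.2 (ιK p.1.1 p.1.2 p.2)) ∈ Zgrp ℝ A)
    (hZL : (fun p : torPairs ℝ =>
        τLL (p.1.1 + ε) (p.1.2 + ε) (ιL (p.1.1 + ε) (p.1.2 + ε) (by linarith [p.2]))) ∈ Zgrp ℝ A) :
    (∀ s t (hst : s ≤ t),
      τKK s t (ιK s t hst) - τLL (s + ε) (t + ε) (ιL (s + ε) (t + ε) (by linarith)) =
        τKL s (s + ε) (φ s) - τKL t (t + ε) (φ t)) ∧
    (QuotientAddGroup.mk (⟨_, hZK⟩ : Zgrp ℝ A) : H1 ℝ A) =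
      QuotientAddGroup.mk (⟨_, hZL⟩ : Zgrp ℝ A) := by
  
  have key : ∀ s t (hst : s ≤ t),
      τKK s t (ιK s t hst) - τLL (s + ε) (t + ε) (ιL (s + ε) (t + ε) (by linarith)) =
        τKL s (s + ε) (φ s) - τKL t (t + ε) (φ t) := by
    intro s t hst
    have h1 := comp_φ s t hst
    have h2 := comp_ι s t hst
    have h3 := τ_htpy s (t + ε) _ _ (hsq s t hst)
    rw [h3, h2] at h1
    rw [eq_comm, sub_eq_sub_iff_add_eq_add, add_comm, h1, add_comm]
  refine ⟨key, ?_⟩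
  rw [QuotientAddGroup.eq]
  rw [AddSubgroup.mem_addSubgroupOf]
  refine ⟨fun x : ℝ => -(τKL x (x + ε) (φ x)), ?_⟩
  rintro ⟨⟨s, t⟩, hst⟩
  have h := key s t hst
  simp only [AddSubgroup.coe_add, AddSubgroup.coe_neg, Pi.add_apply, Pi.neg_apply]
  rw [sub_eq_sub_iff_add_eq_add] at h
  rw [sub_neg_eq_add, neg_add_eq_sub, neg_add_eq_sub]
  change τLL (s + ε) (t + ε) (ιL (s + ε) (t + ε) _) - τKK s t (ιK s t hst) = _
  rw [sub_eq_sub_iff_add_eq_add]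
  exact ((add_comm _ _).trans h.symm).trans (add_comm _ _)
end
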